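/- arXiv:1908.07215 — 8 statements merged into one kernel-verified Lean document; each statement's English description precedes it below -/
import Mathlib

section
/- For each exponent vector α ∈ M there exists a function f : S → F whose support has size exactly ∏_{i=1}^m (k_i - α_i) and which is represented by a polynomial all of whose monomials divide X^α. Concretely, f(X) = ∏_{i∈[m]} ∏_{j ≤ α_i} (X_i - a^i_j) works, where S_i = {a^i_1,...,a^i_{k_i}}. -/
open MvPolynomial

lemma degreeOf_X_sub_C_le {F : Type*} [Field F] {m : ℕ} (i j : Fin m) (a : F) :
    MvPolynomial.degreeOf i (MvPolynomial.X j - MvPolynomial.C a : MvPolynomial (Fin m) F)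
      ≤ if j = i then 1 else 0 := by
  have : (MvPolynomial.X j - MvPolynomial.C a : MvPolynomial (Fin m) F)
      = MvPolynomial.X j + MvPolynomial.C (-a) := by rw [MvPolynomial.C_neg]; ring
  rw [this]
  refine le_trans (MvPolynomial.degreeOf_add_le _ _ _) ?_
  simp only [MvPolynomial.degreeOf_C, MvPolynomial.degreeOf_X]
  rcases eq_or_ne j i with h | h
  · subst h; simp
  · simp [h, Ne.symm h]

/-- For each exponent vector `α ∈ M` there is a polynomial all of whose monomials divide `X^α`
whose evaluation on the grid `S` has support of size exactly `∏ i, (|S i| - α i)`. -/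
theorem stmt_2 {F : Type*} [Field F] [DecidableEq F] {m : ℕ} (S : Fin m → Finset F)
    (α : Fin m → ℕ) (hα : ∀ i, α i < (S i).card) :
    ∃ P : MvPolynomial (Fin m) F,
      (∀ β ∈ P.support, ∀ i, β i ≤ α i) ∧
      ((Fintype.piFinset S).filter (fun x => MvPolynomial.eval x P ≠ 0)).card =
        ∏ i, ((S i).card - α i) := by
  have hT : ∀ i, ∃ T ⊆ S i, T.card = α i :=
    fun i => Finset.exists_subset_card_eq (le_of_lt (hα i))
  choose T hTsub hTcard using hT
  set P : MvPolynomial (Fin m) F :=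
    ∏ i, ∏ a ∈ T i, (MvPolynomial.X i - MvPolynomial.C a) with hP
  refine ⟨P, ?_, ?_⟩
  · -- degree bound
    intro β hβ i
    have hdeg : MvPolynomial.degreeOf i P ≤ α i := by
      rw [hP]
      refine le_trans (MvPolynomial.degreeOf_prod_le _ _ _) ?_
      have h1 : ∀ j, MvPolynomial.degreeOf i
          (∏ a ∈ T j, (MvPolynomial.X j - MvPolynomial.C a : MvPolynomial (Fin m) F))
          ≤ if j = i then α i else 0 := by
        intro j
        refine le_trans (MvPolynomial.degreeOf_prod_le _ _ _) ?_
        refine le_trans (Finset.sum_le_sum (fun a _ => degreeOf_X_sub_C_le i j a)) ?_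
        rcases eq_or_ne j i with h | h <;> simp [h, hTcard]
      calc ∑ j, MvPolynomial.degreeOf i
            (∏ a ∈ T j, (MvPolynomial.X j - MvPolynomial.C a : MvPolynomial (Fin m) F))
          ≤ ∑ j, if j = i then α i else 0 := Finset.sum_le_sum (fun j _ => h1 j)
        _ = α i := by simp
    exact le_trans (MvPolynomial.monomial_le_degreeOf i hβ) hdeg
  · -- cardinality
    have hfilter : (Fintype.piFinset S).filter (fun x => MvPolynomial.eval x P ≠ 0)
        = Fintype.piFinset (fun i => S i \ T i) := by
      ext x
      simp only [Finset.mem_filter, Fintype.mem_piFinset, Finset.mem_sdiff]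
      constructor
      · rintro ⟨hx, hne⟩ i
        refine ⟨hx i, fun hmem => hne ?_⟩
        rw [hP]
        simp only [map_prod, map_sub, MvPolynomial.eval_X, MvPolynomial.eval_C]
        refine Finset.prod_eq_zero (Finset.mem_univ i) ?_
        exact Finset.prod_eq_zero hmem (by simp)
      · intro h
        refine ⟨fun i => (h i).1, ?_⟩
        rw [hP]
        simp only [map_prod, map_sub, MvPolynomial.eval_X, MvPolynomial.eval_C]
        rw [Finset.prod_ne_zero_iff]
        intro i _
        rw [Finset.prod_ne_zero_iff]
        intro a ha
        exact sub_ne_zero.mpr (fun hxa => (h i).2 (hxa ▸ ha))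
    rw [hfilter, Fintype.card_piFinset]
    exact Finset.prod_congr rfl fun i _ => by
      rw [Finset.card_sdiff_of_subset (hTsub i), hTcard]
end

section
/- The minimum distance of the downset code C(S, D) equals min over α ∈ D of ∏_{i=1}^m (k_i - α_i). -/
open MvPolynomial Finset

lemma foot_aux {F : Type*} [Field F] [DecidableEq F] :
    ∀ (m : ℕ) (S : Fin m → Finset F) (P : MvPolynomial (Fin m) F), P ≠ 0 →
    (∀ β ∈ P.support, ∀ i, β i < (S i).card) →
    ∃ β ∈ P.support, ∏ i, ((S i).card - β i) ≤
      ((Fintype.piFinset S).filter (fun x => MvPolynomial.eval x P ≠ 0)).card := by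
  intro m
  induction m with
  | zero =>
      intro S P hP _
      obtain ⟨c, rfl⟩ := MvPolynomial.C_surjective (Fin 0) P
      have hc : c ≠ 0 := fun h => hP (by simp [h])
      refine ⟨0, by simp [MvPolynomial.mem_support_iff, hc], ?_⟩
      have hx : (fun i : Fin 0 => i.elim0 : Fin 0 → F) ∈
          (Fintype.piFinset S).filter (fun x => MvPolynomial.eval x (C c) ≠ 0) := by
        refine Finset.mem_filter.mpr ⟨?_, by simpa using hc⟩
        rw [Fintype.mem_piFinset]; exact fun i => i.elim0
      simpa using Finset.card_pos.mpr ⟨_, hx⟩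
  | succ n ih =>
      intro S P hP hb
      set Q := finSuccEquiv F n P with hQdef
      have hQ0 : Q ≠ 0 := by
        simp only [hQdef, Ne, EmbeddingLike.map_eq_zero_iff]
        exact hP
      set d := Q.natDegree with hd
      have hQd : Q.coeff d ≠ 0 := by
        rw [hd, ← Polynomial.leadingCoeff]
        exact Polynomial.leadingCoeff_ne_zero.mpr hQ0
      -- d < (S 0).card
      have hdlt : d < (S 0).card := by
        have hmem : d ∈ Q.support := Polynomial.natDegree_mem_support_of_nonzero hQ0
        rw [hQdef, support_finSuccEquiv] at hmem
        obtain ⟨γ, hγ, hγ0⟩ := Finset.mem_image.mp hmem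
        simpa [hγ0] using hb γ hγ 0
      -- IH applied to leading coefficient
      obtain ⟨β', hβ'mem, hβ'⟩ := ih (fun i => S i.succ) (Q.coeff d) hQd (by
        intro β hβ i
        have : β.cons d ∈ P.support := mem_support_coeff_finSuccEquiv.mp hβ
        simpa [Finsupp.cons_succ] using hb _ this i.succ)
      refine ⟨β'.cons d, mem_support_coeff_finSuccEquiv.mp hβ'mem, ?_⟩
      set T := (Fintype.piFinset (fun i => S i.succ)).filter
        (fun s => MvPolynomial.eval s (Q.coeff d) ≠ 0) with hT
      set Y : (Fin n → F) → Finset F := fun s =>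
        (S 0).filter (fun y => MvPolynomial.eval (Fin.cons y s) P ≠ 0) with hY
      have hYcard : ∀ s ∈ T, (S 0).card - d ≤ (Y s).card := by
        intro s hs
        have hsne : MvPolynomial.eval s (Q.coeff d) ≠ 0 := (Finset.mem_filter.mp hs).2
        set q := Q.map (MvPolynomial.eval s) with hq
        have hq0 : q ≠ 0 := fun h => hsne (by
          have := congrArg (fun p => Polynomial.coeff p d) h
          simpa [hq, Polynomial.coeff_map] using this)
        have heval : ∀ y, MvPolynomial.eval (Fin.cons y s) P = Polynomial.eval y q := by
          intro y; rw [eval_eq_eval_mv_eval']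
        have hZ : ((S 0).filter (fun y => Polynomial.eval y q = 0)).card ≤ d := by
          calc ((S 0).filter (fun y => Polynomial.eval y q = 0)).card
              ≤ q.roots.toFinset.card := by
                apply Finset.card_le_card
                intro y hy
                rw [Multiset.mem_toFinset, Polynomial.mem_roots hq0]
                exact (Finset.mem_filter.mp hy).2
            _ ≤ Multiset.card q.roots := Multiset.toFinset_card_le _
            _ ≤ q.natDegree := Polynomial.card_roots' q
            _ ≤ d := Polynomial.natDegree_map_le
        have hsplit := Finset.card_filter_add_card_filter_not
          (s := S 0) (p := fun y => Polynomial.eval y q = 0)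
        have hYeq : (Y s).card = ((S 0).filter (fun y => ¬ Polynomial.eval y q = 0)).card := by
          congr 1
          apply Finset.filter_congr
          intro y _
          simp [heval y]
        omega
      set A := (Fintype.piFinset S).filter (fun x => MvPolynomial.eval x P ≠ 0) with hA
      have hcount : ((S 0).card - d) * T.card ≤ A.card := by
        have hinj : ∀ p ∈ T.sigma Y, ∀ q ∈ T.sigma Y,
            (Fin.cons p.2 p.1 : Fin (n+1) → F) = Fin.cons q.2 q.1 → p = q := by
          rintro ⟨s, y⟩ _ ⟨s', y'⟩ _ h
          have h0 := congrFun h 0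
          have hs : s = s' := funext fun i => congrFun h i.succ
          simp only [Fin.cons_zero] at h0
          subst hs; subst h0; rfl
        have hmaps : ∀ p ∈ T.sigma Y, (Fin.cons p.2 p.1 : Fin (n+1) → F) ∈ A := by
          rintro ⟨s, y⟩ hp
          rw [Finset.mem_sigma] at hp
          obtain ⟨hsT, hyY⟩ := hp
          rw [hA, Finset.mem_filter]
          constructor
          · rw [Fintype.mem_piFinset]
            intro i
            refine Fin.cases ?_ ?_ i
            · simpa using (Finset.mem_filter.mp hyY).1
            · intro j
              simpa using Fintype.mem_piFinset.mp (Finset.mem_filter.mp hsT).1 j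
          · exact (Finset.mem_filter.mp hyY).2
        calc ((S 0).card - d) * T.card = ∑ _s ∈ T, ((S 0).card - d) := by
              rw [Finset.sum_const, smul_eq_mul, mul_comm]
          _ ≤ ∑ s ∈ T, (Y s).card := Finset.sum_le_sum hYcard
          _ = (T.sigma Y).card := (Finset.card_sigma T Y).symm
          _ ≤ A.card := Finset.card_le_card_of_injOn _ hmaps hinj
      calc ∏ i, ((S i).card - (β'.cons d) i)
          = ((S 0).card - d) * ∏ i : Fin n, ((S i.succ).card - β' i) := by
            rw [Fin.prod_univ_succ]
            simp [Finsupp.cons_zero, Finsupp.cons_succ]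
        _ ≤ ((S 0).card - d) * T.card := Nat.mul_le_mul_left _ hβ'
        _ ≤ A.card := hcount

/-- The minimum distance of the downset code `C(S, D)` equals
`min_{α ∈ D} ∏ i (|S i| - α i)`: this value is the least Hamming weight of a nonzero codeword. -/
theorem stmt_3 {F : Type*} [Field F] [DecidableEq F] {m : ℕ} (S : Fin m → Finset F)
    (hS : ∀ i, (S i).Nonempty) (D : Finset (Fin m → ℕ)) (hDne : D.Nonempty)
    (hDM : ∀ α ∈ D, ∀ i, α i < (S i).card)
    (hdown : ∀ α ∈ D, ∀ β : Fin m → ℕ, (∀ i, β i ≤ α i) → β ∈ D) :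
    IsLeast
      {w : ℕ | ∃ P : MvPolynomial (Fin m) F,
        (∀ β ∈ P.support, ⇑β ∈ D) ∧
        (∃ x ∈ Fintype.piFinset S, MvPolynomial.eval x P ≠ 0) ∧
        w = ((Fintype.piFinset S).filter (fun x => MvPolynomial.eval x P ≠ 0)).card}
      (D.inf' hDne fun α => ∏ i, ((S i).card - α i)) := by
  constructor
  · -- membership: an explicit polynomial attaining the bound
    obtain ⟨α, hαD, hαeq⟩ := Finset.exists_mem_eq_inf' hDne
      (fun α => ∏ i, ((S i).card - α i))
    choose T hTsub hTcard using fun i => Finset.exists_subset_card_eq (hDM α hαD i).le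
    set P : MvPolynomial (Fin m) F := ∏ i, ∏ s ∈ T i, (X i - C s) with hPdef
    have heval : ∀ x : Fin m → F,
        MvPolynomial.eval x P = ∏ i, ∏ s ∈ T i, (x i - s) := by
      intro x; simp [hPdef, MvPolynomial.eval_prod]
    have hfil : (Fintype.piFinset S).filter (fun x => MvPolynomial.eval x P ≠ 0)
        = Fintype.piFinset (fun i => S i \ T i) := by
      ext x
      rw [Finset.mem_filter, Fintype.mem_piFinset, Fintype.mem_piFinset]
      constructor
      · rintro ⟨h1, h2⟩ i
        rw [Finset.mem_sdiff]
        refine ⟨h1 i, fun hmem => ?_⟩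
        rw [heval] at h2
        exact h2 (Finset.prod_eq_zero (Finset.mem_univ i)
          (Finset.prod_eq_zero hmem (by simp)))
      · intro h
        refine ⟨fun i => (Finset.mem_sdiff.mp (h i)).1, ?_⟩
        rw [heval]
        refine Finset.prod_ne_zero_iff.mpr fun i _ =>
          Finset.prod_ne_zero_iff.mpr fun s hs => sub_ne_zero.mpr fun he => ?_
        exact (Finset.mem_sdiff.mp (h i)).2 (by rwa [he])
    have hcard : ((Fintype.piFinset S).filter
        (fun x => MvPolynomial.eval x P ≠ 0)).card = ∏ i, ((S i).card - α i) := by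
      rw [hfil, Fintype.card_piFinset]
      exact Finset.prod_congr rfl fun i _ => by
        rw [Finset.card_sdiff_of_subset (hTsub i), hTcard]
    have hpos : 0 < ∏ i, ((S i).card - α i) :=
      Finset.prod_pos fun i _ => Nat.sub_pos_of_lt (hDM α hαD i)
    obtain ⟨x, hx⟩ := Finset.card_pos.mp (by rw [hcard]; exact hpos)
    have hx' := Finset.mem_filter.mp hx
    refine ⟨P, ?_, ⟨x, hx'.1, hx'.2⟩, by rw [hαeq, hcard]⟩
    -- support condition
    intro β hβ
    refine hdown α hαD _ fun j => ?_
    have h1 : β j ≤ P.degreeOf j := by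
      rw [MvPolynomial.degreeOf_eq_sup]
      exact Finset.le_sup (f := fun m => m j) hβ
    have h2 : P.degreeOf j ≤ α j := by
      calc P.degreeOf j ≤ ∑ i, MvPolynomial.degreeOf j (∏ s ∈ T i, (X i - C s)) :=
            MvPolynomial.degreeOf_prod_le _ _ _
        _ ≤ ∑ i, if j = i then α i else 0 := by
            refine Finset.sum_le_sum fun i _ => ?_
            calc MvPolynomial.degreeOf j (∏ s ∈ T i, (X i - C s))
                ≤ ∑ s ∈ T i, MvPolynomial.degreeOf j (X i - C s) :=
                  MvPolynomial.degreeOf_prod_le _ _ _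
              _ ≤ ∑ _s ∈ T i, (if j = i then 1 else 0) := by
                  refine Finset.sum_le_sum fun s _ => ?_
                  rw [sub_eq_add_neg, ← MvPolynomial.C_neg]
                  refine le_trans (MvPolynomial.degreeOf_add_le _ _ _) ?_
                  simp [MvPolynomial.degreeOf_X, MvPolynomial.degreeOf_C]
              _ = if j = i then α i else 0 := by
                  rw [Finset.sum_const, hTcard]
                  split <;> simp
        _ = α j := by simp
    exact h1.trans h2
  · -- lower bound
    rintro w ⟨P, hsup, ⟨x, hxmem, hxne⟩, rfl⟩
    have hP0 : P ≠ 0 := fun h => hxne (by simp [h])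
    obtain ⟨β, hβmem, hβle⟩ := foot_aux m S P hP0
      (fun β hβ i => hDM _ (hsup β hβ) i)
    exact le_trans (Finset.inf'_le _ (hsup β hβmem)) hβle
end

section
/- Let D ⊆ M be a downset with d = deg_m(D). For each 0 ≤ i ≤ d, μ(S, D) ≤ μ(S̃, D_i) · μ(S_m, {0,...,i}), where μ denotes minimum distance of the corresponding downset code. -/
open MvPolynomial

/-- The minimum distance of the downset code `C(S, D)`: the least Hamming weight of the
evaluation on the grid `S` of a polynomial supported on `D` that is nonzero as a function. -/
noncomputable def muDist {F : Type*} [Field F] [DecidableEq F] {n : ℕ}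
    (S : Fin n → Finset F) (D : Set (Fin n → ℕ)) : ℕ :=
  sInf {w : ℕ | ∃ P : MvPolynomial (Fin n) F,
    (∀ β ∈ P.support, ⇑β ∈ D) ∧
    (∃ x ∈ Fintype.piFinset S, MvPolynomial.eval x P ≠ 0) ∧
    w = ((Fintype.piFinset S).filter (fun x => MvPolynomial.eval x P ≠ 0)).card}

/-- For a downset `D` with `d = deg_m(D)` and any `0 ≤ i ≤ d`,
`μ(S, D) ≤ μ(S̃, D_i) · μ(S_m, {0,…,i})`. -/
theorem stmt_6 {F : Type*} [Field F] [DecidableEq F] {m : ℕ}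
    (S : Fin (m + 1) → Finset F) (hS : ∀ i, (S i).Nonempty)
    (D : Set (Fin (m + 1) → ℕ))
    (hDM : ∀ α ∈ D, ∀ i, α i < (S i).card)
    (hdown : ∀ α ∈ D, ∀ β : Fin (m + 1) → ℕ, (∀ i, β i ≤ α i) → β ∈ D)
    (d : ℕ) (hd : d = sSup {j | ∃ α ∈ D, α (Fin.last m) = j})
    (i : ℕ) (hi : i ≤ d) :
    muDist S D ≤
      muDist (fun j : Fin m => S j.castSucc) {β : Fin m → ℕ | Fin.snoc β i ∈ D} *
      muDist (fun _ : Fin 1 => S (Fin.last m)) {β : Fin 1 → ℕ | β 0 ≤ i} := by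
  classical
  by_cases hD : D.Nonempty
  swap
  · have hempty : {w : ℕ | ∃ P : MvPolynomial (Fin (m+1)) F,
        (∀ β ∈ P.support, ⇑β ∈ D) ∧
        (∃ x ∈ Fintype.piFinset S, MvPolynomial.eval x P ≠ 0) ∧
        w = ((Fintype.piFinset S).filter (fun x => MvPolynomial.eval x P ≠ 0)).card} = ∅ := by
      ext w
      simp only [Set.mem_setOf_eq, Set.mem_empty_iff_false, iff_false]
      rintro ⟨P, hsupp, ⟨x, -, hx⟩, -⟩
      apply hx
      have : P = 0 := by
        by_contra hP
        obtain ⟨β, hβ⟩ := (MvPolynomial.support_nonempty (p := P)).2 hP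
        exact hD ⟨⇑β, hsupp β hβ⟩
      simp [this]
    rw [muDist, hempty]
    simp
  -- D nonempty: d is attained
  have hdmem : d ∈ {j | ∃ α ∈ D, α (Fin.last m) = j} := by
    rw [hd]
    apply Nat.sSup_mem
    · obtain ⟨α, hα⟩ := hD
      exact ⟨α (Fin.last m), α, hα, rfl⟩
    · refine ⟨(S (Fin.last m)).card, ?_⟩
      rintro j ⟨α, hα, rfl⟩
      exact (hDM α hα _).le
  obtain ⟨α, hαD, hαd⟩ := hdmem
  have hsnoc0 : Fin.snoc (0 : Fin m → ℕ) i ∈ D := by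
    apply hdown α hαD
    intro j
    refine Fin.lastCases ?_ ?_ j
    · simpa [hαd] using hi
    · intro k; simp [Pi.zero_apply]
  -- the two RHS sets are nonempty
  have hT1 : {w : ℕ | ∃ P : MvPolynomial (Fin m) F,
      (∀ β ∈ P.support, ⇑β ∈ {β : Fin m → ℕ | Fin.snoc β i ∈ D}) ∧
      (∃ x ∈ Fintype.piFinset (fun j : Fin m => S j.castSucc), MvPolynomial.eval x P ≠ 0) ∧
      w = ((Fintype.piFinset (fun j : Fin m => S j.castSucc)).filter
        (fun x => MvPolynomial.eval x P ≠ 0)).card}.Nonempty := by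
    obtain ⟨x, hx⟩ := (Fintype.piFinset_nonempty.2 (fun j : Fin m => hS j.castSucc)).exists_mem
    refine ⟨_, (1 : MvPolynomial (Fin m) F), ?_, ⟨x, hx, by simp⟩, rfl⟩
    intro β hβ
    have hβ0 : β = 0 := by
      by_contra h
      simp [MvPolynomial.mem_support_iff, MvPolynomial.coeff_one, h] at hβ
    subst hβ0
    simpa using hsnoc0
  have hT2 : {w : ℕ | ∃ P : MvPolynomial (Fin 1) F,
      (∀ β ∈ P.support, ⇑β ∈ {β : Fin 1 → ℕ | β 0 ≤ i}) ∧
      (∃ x ∈ Fintype.piFinset (fun _ : Fin 1 => S (Fin.last m)), MvPolynomial.eval x P ≠ 0) ∧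
      w = ((Fintype.piFinset (fun _ : Fin 1 => S (Fin.last m))).filter
        (fun x => MvPolynomial.eval x P ≠ 0)).card}.Nonempty := by
    obtain ⟨x, hx⟩ := (Fintype.piFinset_nonempty.2 (fun _ : Fin 1 => hS (Fin.last m))).exists_mem
    refine ⟨_, (1 : MvPolynomial (Fin 1) F), ?_, ⟨x, hx, by simp⟩, rfl⟩
    intro β hβ
    have hβ0 : β = 0 := by
      by_contra h
      simp [MvPolynomial.mem_support_iff, MvPolynomial.coeff_one, h] at hβ
    simp [hβ0]
  -- extract minimizers
  obtain ⟨P₁, hP₁supp, ⟨x₁, hx₁S, hx₁⟩, hw₁⟩ := Nat.sInf_mem hT1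
  obtain ⟨P₂, hP₂supp, ⟨x₂, hx₂S, hx₂⟩, hw₂⟩ := Nat.sInf_mem hT2
  set w₁ := muDist (fun j : Fin m => S j.castSucc) {β : Fin m → ℕ | Fin.snoc β i ∈ D} with hw₁def
  set w₂ := muDist (fun _ : Fin 1 => S (Fin.last m)) {β : Fin 1 → ℕ | β 0 ≤ i} with hw₂def
  -- the product polynomial
  set P : MvPolynomial (Fin (m+1)) F :=
    rename Fin.castSucc P₁ * rename (fun _ : Fin 1 => Fin.last m) P₂ with hP
  have hlast_notin : (Fin.last m) ∉ Set.range (Fin.castSucc : Fin m → Fin (m+1)) := by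
    rintro ⟨k, hk⟩
    exact (Fin.castSucc_lt_last k).ne hk
  have heval : ∀ x : Fin (m+1) → F, MvPolynomial.eval x P =
      MvPolynomial.eval (fun j : Fin m => x j.castSucc) P₁ *
      MvPolynomial.eval (fun _ : Fin 1 => x (Fin.last m)) P₂ := by
    intro x
    simp [hP, eval_rename, Function.comp_def]
  -- support condition
  have hPsupp : ∀ β ∈ P.support, ⇑β ∈ D := by
    intro γ hγ
    have := MvPolynomial.support_mul _ _ hγ
    rw [Finset.mem_add] at this
    obtain ⟨a, ha, b, hb, rfl⟩ := this
    rw [support_rename_of_injective (Fin.castSucc_injective m)] at ha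
    rw [support_rename_of_injective (Function.injective_of_subsingleton _)] at hb
    obtain ⟨β₁, hβ₁, rfl⟩ := Finset.mem_image.1 ha
    obtain ⟨β₂, hβ₂, rfl⟩ := Finset.mem_image.1 hb
    apply hdown (Fin.snoc (⇑β₁) i) (hP₁supp β₁ hβ₁)
    intro j
    refine Fin.lastCases ?_ ?_ j
    · have h1 : (Finsupp.mapDomain Fin.castSucc β₁) (Fin.last m) = 0 :=
        Finsupp.mapDomain_notin_range _ _ hlast_notin
      have h2 : (Finsupp.mapDomain (fun _ : Fin 1 => Fin.last m) β₂) (Fin.last m) = β₂ 0 := by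
        have hβ₂e : β₂ = Finsupp.single 0 (β₂ 0) := Finsupp.unique_single β₂
        rw [hβ₂e, Finsupp.mapDomain_single]
        simp
      simp only [Finsupp.coe_add, Pi.add_apply, h1, h2, zero_add, Fin.snoc_last]
      exact hP₂supp β₂ hβ₂
    · intro k
      have h1 : (Finsupp.mapDomain Fin.castSucc β₁) k.castSucc = β₁ k :=
        Finsupp.mapDomain_apply (Fin.castSucc_injective m) _ _
      have h2 : (Finsupp.mapDomain (fun _ : Fin 1 => Fin.last m) β₂) k.castSucc = 0 := by
        apply Finsupp.mapDomain_notin_range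
        rintro ⟨j, hj⟩
        exact (Fin.castSucc_lt_last k).ne' hj
      simp only [Finsupp.coe_add, Pi.add_apply, h1, h2, add_zero, Fin.snoc_castSucc]
      exact le_rfl
  -- nonzero witness
  have hwitness : ∃ x ∈ Fintype.piFinset S, MvPolynomial.eval x P ≠ 0 := by
    refine ⟨(Fin.snoc x₁ (x₂ 0) : Fin (m+1) → F), ?_, ?_⟩
    · rw [Fintype.mem_piFinset]
      intro j
      refine Fin.lastCases ?_ ?_ j
      · simpa using (Fintype.mem_piFinset.1 hx₂S) 0
      · intro k
        simpa using (Fintype.mem_piFinset.1 hx₁S) k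
    · rw [heval]
      have e1 : (fun j : Fin m => (Fin.snoc x₁ (x₂ 0) : Fin (m+1) → F) j.castSucc) = x₁ := by
        funext k; simp
      have e2 : (fun _ : Fin 1 => (Fin.snoc x₁ (x₂ 0) : Fin (m+1) → F) (Fin.last m)) = x₂ := by
        funext j
        have : j = 0 := Subsingleton.elim _ _
        simp [this]
      rw [e1, e2]
      exact mul_ne_zero hx₁ hx₂
  -- weight computation
  have hcard : ((Fintype.piFinset S).filter (fun x => MvPolynomial.eval x P ≠ 0)).card
      = w₁ * w₂ := by
    set A := (Fintype.piFinset (fun j : Fin m => S j.castSucc)).filter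
      (fun x => MvPolynomial.eval x P₁ ≠ 0) with hA
    set B := (Fintype.piFinset (fun _ : Fin 1 => S (Fin.last m))).filter
      (fun x => MvPolynomial.eval x P₂ ≠ 0) with hB
    have himg : (Fintype.piFinset S).filter (fun x => MvPolynomial.eval x P ≠ 0)
        = (A ×ˢ B).image (fun p => Fin.snoc p.1 (p.2 0)) := by
      ext x
      simp only [Finset.mem_filter, Finset.mem_image, Finset.mem_product, hA, hB, Prod.exists]
      constructor
      · rintro ⟨hxS, hxP⟩
        rw [heval] at hxP
        refine ⟨fun j => x j.castSucc, fun _ => x (Fin.last m), ⟨⟨?_, ?_⟩, ⟨?_, ?_⟩⟩, ?_⟩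
        · rw [Fintype.mem_piFinset]; intro k; exact (Fintype.mem_piFinset.1 hxS) _
        · exact fun h => hxP (by rw [h, zero_mul])
        · rw [Fintype.mem_piFinset]; intro k; exact (Fintype.mem_piFinset.1 hxS) _
        · exact fun h => hxP (by rw [h, mul_zero])
        · funext j
          refine Fin.lastCases ?_ ?_ j
          · simp
          · intro k; simp
      · rintro ⟨a, b, ⟨⟨haS, haP⟩, hbS, hbP⟩, rfl⟩
        have e1 : (fun j : Fin m => (Fin.snoc a (b 0) : Fin (m+1) → F) j.castSucc) = a := by
          funext k; simp
        have e2 : (fun _ : Fin 1 => (Fin.snoc a (b 0) : Fin (m+1) → F) (Fin.last m)) = b := by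
          funext j
          have : j = 0 := Subsingleton.elim _ _
          simp [this]
        constructor
        · rw [Fintype.mem_piFinset]
          intro j
          refine Fin.lastCases ?_ ?_ j
          · simpa using (Fintype.mem_piFinset.1 hbS) 0
          · intro k; simpa using (Fintype.mem_piFinset.1 haS) k
        · rw [heval, e1, e2]
          exact mul_ne_zero haP hbP
    have hinj : Set.InjOn (fun p : (Fin m → F) × (Fin 1 → F) => (Fin.snoc p.1 (p.2 0) : Fin (m+1) → F)) ↑(A ×ˢ B) := by
      rintro ⟨a, b⟩ - ⟨a', b'⟩ - hab
      simp only at hab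
      have ha : a = a' := by
        funext k
        have := congrFun hab k.castSucc
        simpa using this
      have hb : b = b' := by
        funext j
        have hj : j = 0 := Subsingleton.elim _ _
        have := congrFun hab (Fin.last m)
        simpa [hj] using this
      simp [ha, hb]
    rw [himg, Finset.card_image_of_injOn hinj, Finset.card_product]
    simp only [hw₁def, hw₂def, muDist]
    rw [hw₁, hw₂]
  -- conclude
  exact Nat.sInf_le ⟨P, hPsupp, hwitness, hcard.symm⟩
end

section
/- If U ∈ C(S̃, D_i) and V ∈ C(S_m, {0,...,i}), then the product function (x,y) ↦ U(x)·V(y) lies in C(S, D), and its Hamming weight equals weight(U) · weight(V). -/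
open MvPolynomial

/-- Products of codewords: if `U ∈ C(S̃, D_i)` and `V ∈ C(S_m, {0,…,i})`, then the product
function `(x, y) ↦ U(x)·V(y)` lies in `C(S, D)` (it is the evaluation of a polynomial supported
on `D`), and its Hamming weight equals `weight(U) · weight(V)`. -/
theorem stmt_7 {F : Type*} [Field F] [DecidableEq F] {m : ℕ}
    (S : Fin (m + 1) → Finset F) (D : Set (Fin (m + 1) → ℕ))
    (hdown : ∀ α ∈ D, ∀ β : Fin (m + 1) → ℕ, (∀ i, β i ≤ α i) → β ∈ D)
    (i : ℕ) (U : MvPolynomial (Fin m) F) (V : Polynomial F)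
    (hU : ∀ β ∈ U.support, Fin.snoc ⇑β i ∈ D)
    (hV : ∀ j ∈ V.support, j ≤ i) :
    (∃ W : MvPolynomial (Fin (m + 1)) F,
      (∀ α ∈ W.support, ⇑α ∈ D) ∧
      ∀ z ∈ Fintype.piFinset S,
        MvPolynomial.eval z W =
          MvPolynomial.eval (fun j : Fin m => z j.castSucc) U * V.eval (z (Fin.last m))) ∧
    ((Fintype.piFinset S).filter (fun z =>
        MvPolynomial.eval (fun j : Fin m => z j.castSucc) U * V.eval (z (Fin.last m)) ≠ 0)).card =
      ((Fintype.piFinset (fun j : Fin m => S j.castSucc)).filter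
          (fun x => MvPolynomial.eval x U ≠ 0)).card *
        ((S (Fin.last m)).filter (fun y => V.eval y ≠ 0)).card := by
  constructor
  · -- existence of W
    refine ⟨∑ β ∈ U.support, ∑ j ∈ V.support,
      monomial (Finsupp.equivFunOnFinite.symm (Fin.snoc ⇑β j)) (U.coeff β * V.coeff j), ?_, ?_⟩
    · intro α hα
      have h1 := MvPolynomial.support_sum hα
      simp only [Finset.mem_biUnion] at h1
      obtain ⟨β, hβ, h2⟩ := h1
      have h3 := MvPolynomial.support_sum h2
      simp only [Finset.mem_biUnion] at h3
      obtain ⟨j, hj, h4⟩ := h3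
      have h5 := MvPolynomial.support_monomial_subset h4
      simp only [Finset.mem_singleton] at h5
      subst h5
      have hcoe : ⇑(Finsupp.equivFunOnFinite.symm (Fin.snoc (⇑β) j)) = Fin.snoc ⇑β j := rfl
      rw [hcoe]
      refine hdown _ (hU β hβ) _ ?_
      intro k
      refine Fin.lastCases ?_ ?_ k
      · simpa using hV j hj
      · intro k; simp
    · intro z _
      rw [map_sum]
      rw [MvPolynomial.eval_eq' (fun j : Fin m => z j.castSucc) U, Polynomial.eval_eq_sum,
        Polynomial.sum_def, Finset.sum_mul_sum]
      refine Finset.sum_congr rfl fun β hβ => ?_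
      rw [map_sum]
      refine Finset.sum_congr rfl fun j hj => ?_
      rw [MvPolynomial.eval_monomial, Finsupp.prod_pow]
      simp only [Finsupp.coe_equivFunOnFinite_symm]
      rw [Fin.prod_univ_castSucc]
      simp only [Fin.snoc_castSucc, Fin.snoc_last]
      ring
  · -- weight multiplicativity
    have key : ((Fintype.piFinset (fun j : Fin m => S j.castSucc)).filter
          (fun x => MvPolynomial.eval x U ≠ 0)) ×ˢ
        ((S (Fin.last m)).filter (fun y => V.eval y ≠ 0)) =
        ((Fintype.piFinset (fun j : Fin m => S j.castSucc)) ×ˢ (S (Fin.last m))).filter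
          (fun p => MvPolynomial.eval p.1 U ≠ 0 ∧ V.eval p.2 ≠ 0) := by
      exact (Finset.filter_product _ _).symm
    rw [← Finset.card_product, key]
    refine Finset.card_bij' (fun z _ => (fun j : Fin m => z j.castSucc, z (Fin.last m)))
      (fun p _ => Fin.snoc p.1 p.2) ?_ ?_ ?_ ?_
    · intro z hz
      simp only [Finset.mem_filter, Fintype.mem_piFinset, Finset.mem_product] at hz ⊢
      refine ⟨⟨fun j => hz.1 j.castSucc, hz.1 (Fin.last m)⟩, ?_⟩
      exact mul_ne_zero_iff.mp hz.2
    · intro p hp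
      simp only [Finset.mem_filter, Fintype.mem_piFinset, Finset.mem_product] at hp ⊢
      constructor
      · intro k
        refine Fin.lastCases ?_ ?_ k
        · simpa using hp.1.2
        · intro k; simpa using hp.1.1 k
      · simp only [Fin.snoc_castSucc, Fin.snoc_last]
        exact mul_ne_zero hp.2.1 hp.2.2
    · intro z _
      simp only [Fin.snoc_castSucc, Fin.snoc_last]
      exact Fin.snoc_init_self z
    · intro p _
      simp [Fin.snoc_castSucc, Fin.snoc_last]
end

section
/- Let X^α be a monomial, A ⊆ S the zero set on the grid S of a polynomial f whose leading monomial (w.r.t. a fixed monomial order) is X^α. Then every function g : A → F can be represented on A by a polynomial all of whose monomials lie in M \ ∇(α). Consequently |A| ≤ |S| - ∏_i (k_i - α_i). -/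
open MvPolynomial

section Aux

variable {F : Type*} [Field F] [DecidableEq F] {m : ℕ}

/-- Structure of the grid vanishing polynomial `∏ (X i - C s)`. -/
lemma vanisher_struct (i : Fin m) (t : Finset F) :
    MvPolynomial.coeff (Finsupp.single i t.card)
      (∏ s ∈ t, (MvPolynomial.X i - MvPolynomial.C s : MvPolynomial (Fin m) F)) = 1 ∧
    ∀ δ ∈ (∏ s ∈ t, (MvPolynomial.X i - MvPolynomial.C s : MvPolynomial (Fin m) F)).support,
      δ ≤ Finsupp.single i t.card := by
  classical
  induction t using Finset.induction_on with
  | empty =>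
    constructor
    · simp
    · intro δ hδ
      rw [MvPolynomial.mem_support_iff] at hδ
      by_contra hne
      have hδ0 : δ ≠ 0 := by
        intro h0; apply hne; rw [h0]; exact bot_le
      rw [Finset.prod_empty, MvPolynomial.coeff_one,
        if_neg (fun h => hδ0 h.symm)] at hδ
      exact hδ rfl
  | @insert a t ha IH =>
    rw [Finset.prod_insert ha]
    set p : MvPolynomial (Fin m) F := ∏ s ∈ t, (X i - C s) with hp
    have hsupXC : ∀ u ∈ (X i - C a : MvPolynomial (Fin m) F).support,
        u ≤ Finsupp.single i 1 := by
      intro u hu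
      rw [MvPolynomial.mem_support_iff] at hu
      by_contra hle
      apply hu
      rw [MvPolynomial.coeff_sub, MvPolynomial.coeff_X', MvPolynomial.coeff_C]
      rw [if_neg, if_neg, sub_zero]
      · rintro rfl; exact hle bot_le
      · rintro rfl; exact hle le_rfl
    constructor
    · rw [Finset.card_insert_of_notMem ha]
      have h1 : (Finsupp.single i (t.card + 1)) = Finsupp.single i 1 + Finsupp.single i t.card := by
        rw [← Finsupp.single_add]; ring_nf
      rw [sub_mul, MvPolynomial.coeff_sub, h1]
      have hX : (X i : MvPolynomial (Fin m) F) = monomial (Finsupp.single i 1) 1 := by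
        rw [MvPolynomial.X]
      rw [hX, MvPolynomial.coeff_monomial_mul, one_mul, IH.1]
      have h0 : MvPolynomial.coeff (Finsupp.single i 1 + Finsupp.single i t.card) p = 0 := by
        rw [← MvPolynomial.notMem_support_iff]
        intro hmem
        have := IH.2 _ hmem
        have h2 := this i
        simp [Finsupp.single_add] at h2
      rw [MvPolynomial.coeff_C_mul, h0, mul_zero, sub_zero]
    · intro δ hδ
      have := MvPolynomial.support_mul _ _ hδ
      rw [Finset.mem_add] at this
      obtain ⟨u, hu, v, hv, rfl⟩ := this
      rw [Finset.card_insert_of_notMem ha]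
      have h1 : (Finsupp.single i (t.card + 1) : Fin m →₀ ℕ)
          = Finsupp.single i 1 + Finsupp.single i t.card := by
        rw [← Finsupp.single_add]; ring_nf
      rw [h1]
      exact add_le_add (hsupXC u hu) (IH.2 v hv)

lemma vanisher_eval (i : Fin m) (t : Finset F) (x : Fin m → F) (hx : x i ∈ t) :
    MvPolynomial.eval x (∏ s ∈ t, (MvPolynomial.X i - MvPolynomial.C s : MvPolynomial (Fin m) F))
      = 0 := by
  rw [map_prod]
  apply Finset.prod_eq_zero hx
  simp

/-- The key reduction lemma: every polynomial can be reduced modulo `f` and the grid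
vanishing polynomials to one supported on the complement of `∇(α)` inside the box. -/
lemma reduce_lemma (S : Fin m → Finset F) (ord : MonomialOrder (Fin m))
    (f : MvPolynomial (Fin m) F)
    (α : (Fin m) →₀ ℕ) (hα : α ∈ f.support)
    (hlead : ∀ β ∈ f.support, ord.toSyn β ≤ ord.toSyn α) :
    ∀ Q : MvPolynomial (Fin m) F, ∃ r : MvPolynomial (Fin m) F,
      (∀ β ∈ r.support, (∀ i, β i < (S i).card) ∧ ¬ (α ≤ β)) ∧
      ∀ x ∈ (Fintype.piFinset S).filter (fun x => MvPolynomial.eval x f = 0),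
        MvPolynomial.eval x r = MvPolynomial.eval x Q := by
  classical
  set A := (Fintype.piFinset S).filter (fun x => MvPolynomial.eval x f = 0) with hA
  suffices H : ∀ d : ord.syn, ∀ Q : MvPolynomial (Fin m) F, Q.support.sup ord.toSyn = d →
      ∃ r : MvPolynomial (Fin m) F,
      (∀ β ∈ r.support, (∀ i, β i < (S i).card) ∧ ¬ (α ≤ β)) ∧
      ∀ x ∈ A, MvPolynomial.eval x r = MvPolynomial.eval x Q by
    intro Q; exact H _ Q rfl
  intro d
  induction d using WellFoundedLT.induction with
  | _ d IH =>
  intro Q hQd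
  by_cases hQ0 : Q = 0
  · exact ⟨0, by simp, by simp [hQ0]⟩
  have hsne : Q.support.Nonempty := MvPolynomial.support_nonempty.mpr hQ0
  obtain ⟨γ, hγmem, hγsup⟩ := Finset.exists_mem_eq_sup Q.support hsne ord.toSyn
  set c := Q.coeff γ with hc
  have hcne : c ≠ 0 := MvPolynomial.mem_support_iff.mp hγmem
  have hmax : ∀ β ∈ Q.support, ord.toSyn β ≤ ord.toSyn γ := by
    intro β hβ; rw [← hγsup, ← hQd] at *; exact Finset.le_sup hβ
  have hd : d = ord.toSyn γ := by rw [← hQd, hγsup]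
  -- common recursion step
  have step : ∀ h : MvPolynomial (Fin m) F, h.coeff γ = c →
      (∀ δ ∈ h.support, ord.toSyn δ ≤ ord.toSyn γ) →
      ∃ r : MvPolynomial (Fin m) F,
        (∀ β ∈ r.support, (∀ i, β i < (S i).card) ∧ ¬ (α ≤ β)) ∧
        ∀ x ∈ A, MvPolynomial.eval x r = MvPolynomial.eval x (Q - h) := by
    intro h hhc hhs
    by_cases hQh : Q - h = 0
    · exact ⟨0, by simp, by simp [hQh]⟩
    have hstrict : ∀ β ∈ (Q - h).support, ord.toSyn β < ord.toSyn γ := by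
      intro β hβ
      have hne : β ≠ γ := by
        rintro rfl
        rw [MvPolynomial.mem_support_iff, MvPolynomial.coeff_sub, hhc, ← hc, sub_self] at hβ
        exact hβ rfl
      have hmem : β ∈ Q.support ∪ h.support := by
        rw [Finset.mem_union]
        by_contra hcon
        push_neg at hcon
        rw [MvPolynomial.mem_support_iff, MvPolynomial.coeff_sub,
          MvPolynomial.notMem_support_iff.mp hcon.1,
          MvPolynomial.notMem_support_iff.mp hcon.2, sub_zero] at hβ
        exact hβ rfl
      have hle : ord.toSyn β ≤ ord.toSyn γ := by
        rcases Finset.mem_union.mp hmem with h1 | h1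
        · exact hmax β h1
        · exact hhs β h1
      exact lt_of_le_of_ne hle (fun e => hne (ord.toSyn.injective e))
    have hsup_lt : (Q - h).support.sup ord.toSyn < d := by
      rw [hd]
      rw [Finset.sup_lt_iff]
      · exact hstrict
      · obtain ⟨β, hβ⟩ := MvPolynomial.support_nonempty.mpr hQh
        exact lt_of_le_of_lt bot_le (hstrict β hβ)
    exact IH _ hsup_lt (Q - h) rfl
  by_cases hallow : (∀ i, γ i < (S i).card) ∧ ¬ (α ≤ γ)
  · obtain ⟨r', hr's, hr'e⟩ := step (monomial γ c) (by simp) (by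
      intro δ hδ
      rw [MvPolynomial.support_monomial, if_neg hcne, Finset.mem_singleton] at hδ
      exact le_of_eq (congrArg _ hδ))
    refine ⟨r' + monomial γ c, ?_, ?_⟩
    · intro β hβ
      have := MvPolynomial.support_add hβ
      rcases Finset.mem_union.mp this with h1 | h1
      · exact hr's β h1
      · rw [MvPolynomial.support_monomial, if_neg hcne, Finset.mem_singleton] at h1
        subst h1; exact hallow
    · intro x hx
      rw [map_add, hr'e x hx, map_sub]
      ring
  · have hcases : (∃ i, (S i).card ≤ γ i) ∨ (α ≤ γ) := by
      by_cases hb : ∀ i, γ i < (S i).card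
      · right
        by_contra h2
        exact hallow ⟨hb, h2⟩
      · left
        push_neg at hb
        obtain ⟨i, hi⟩ := hb
        exact ⟨i, hi⟩
    have key : ∃ h : MvPolynomial (Fin m) F, h.coeff γ = c ∧
        (∀ δ ∈ h.support, ord.toSyn δ ≤ ord.toSyn γ) ∧
        (∀ x ∈ A, MvPolynomial.eval x h = 0) := by
      rcases hcases with ⟨i, hi⟩ | hαγ
      · refine ⟨monomial (γ - Finsupp.single i (S i).card) c
            * ∏ s ∈ S i, (X i - C s), ?_, ?_, ?_⟩
        · have hle : Finsupp.single i (S i).card ≤ γ := Finsupp.single_le_iff.mpr hi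
          have h1 : MvPolynomial.coeff
              ((γ - Finsupp.single i (S i).card) + Finsupp.single i (S i).card)
              (monomial (γ - Finsupp.single i (S i).card) c * ∏ s ∈ S i, (X i - C s)) = c := by
            rw [MvPolynomial.coeff_monomial_mul, (vanisher_struct i (S i)).1, mul_one]
          rwa [tsub_add_cancel_of_le hle] at h1
        · intro δ hδ
          have := MvPolynomial.support_mul _ _ hδ
          rw [Finset.mem_add] at this
          obtain ⟨u, hu, v, hv, rfl⟩ := this
          have hu' : u = γ - Finsupp.single i (S i).card := by
            rw [MvPolynomial.support_monomial, if_neg hcne, Finset.mem_singleton] at hu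
            exact hu
          subst hu'
          have hv' := (vanisher_struct i (S i)).2 v hv
          apply ord.toSyn_monotone
          calc γ - Finsupp.single i (S i).card + v
              ≤ γ - Finsupp.single i (S i).card + Finsupp.single i (S i).card :=
                add_le_add_right hv' _
            _ = γ := tsub_add_cancel_of_le (Finsupp.single_le_iff.mpr hi)
        · intro x hx
          rw [hA, Finset.mem_filter] at hx
          have hxi : x i ∈ S i := by
            have := hx.1
            rw [Fintype.mem_piFinset] at this
            exact this i
          rw [map_mul, vanisher_eval i (S i) x hxi, mul_zero]
      · refine ⟨monomial (γ - α) (c / f.coeff α) * f, ?_, ?_, ?_⟩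
        · have h1 : MvPolynomial.coeff ((γ - α) + α)
              (monomial (γ - α) (c / f.coeff α) * f) = c := by
            rw [MvPolynomial.coeff_monomial_mul,
              div_mul_cancel₀ _ (MvPolynomial.mem_support_iff.mp hα)]
          rwa [tsub_add_cancel_of_le hαγ] at h1
        · intro δ hδ
          have := MvPolynomial.support_mul _ _ hδ
          rw [Finset.mem_add] at this
          obtain ⟨u, hu, v, hv, rfl⟩ := this
          have hcne' : c / f.coeff α ≠ 0 :=
            div_ne_zero hcne (MvPolynomial.mem_support_iff.mp hα)
          have hu' : u = γ - α := by
            rw [MvPolynomial.support_monomial, if_neg hcne', Finset.mem_singleton] at hu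
            exact hu
          subst hu'
          calc ord.toSyn (γ - α + v) = ord.toSyn (γ - α) + ord.toSyn v := by rw [map_add]
            _ ≤ ord.toSyn (γ - α) + ord.toSyn α := by
                exact add_le_add_right (hlead v hv) _
            _ = ord.toSyn (γ - α + α) := by rw [map_add]
            _ = ord.toSyn γ := by rw [tsub_add_cancel_of_le hαγ]
        · intro x hx
          rw [hA, Finset.mem_filter] at hx
          rw [map_mul, hx.2, mul_zero]
    obtain ⟨h, hhc, hhs, hhz⟩ := key
    obtain ⟨r, hrs, hre⟩ := step h hhc hhs
    refine ⟨r, hrs, ?_⟩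
    intro x hx
    rw [hre x hx, map_sub, hhz x hx, sub_zero]

/-- Interpolation: any function on the grid is realized by some polynomial. -/
lemma interp_lemma (S : Fin m → Finset F) (g : (Fin m → F) → F) :
    ∃ Q : MvPolynomial (Fin m) F, ∀ x ∈ Fintype.piFinset S, MvPolynomial.eval x Q = g x := by
  classical
  set χ : (Fin m → F) → MvPolynomial (Fin m) F :=
    fun a => ∏ i, ∏ s ∈ (S i).erase (a i), (X i - C s) with hχ
  have hχeval : ∀ a x : Fin m → F,
      MvPolynomial.eval x (χ a) = ∏ i, ∏ s ∈ (S i).erase (a i), (x i - s) := by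
    intro a x; rw [hχ]; simp [map_prod]
  refine ⟨∑ a ∈ Fintype.piFinset S,
    C (g a * (∏ i, ∏ s ∈ (S i).erase (a i), (a i - s))⁻¹) * χ a, ?_⟩
  intro x hx
  rw [map_sum]
  have hterm : ∀ a ∈ Fintype.piFinset S, a ≠ x →
      MvPolynomial.eval x (C (g a * (∏ i, ∏ s ∈ (S i).erase (a i), (a i - s))⁻¹) * χ a) = 0 := by
    intro a _ hax
    have : ∃ i, a i ≠ x i := by
      by_contra hcon; push_neg at hcon; exact hax (funext hcon)
    obtain ⟨i, hi⟩ := this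
    have hxi : x i ∈ (S i).erase (a i) := by
      rw [Finset.mem_erase]
      exact ⟨fun e => hi e.symm, (Fintype.mem_piFinset.mp hx) i⟩
    have hz : (∏ j, ∏ s ∈ (S j).erase (a j), (x j - s)) = 0 :=
      Finset.prod_eq_zero (Finset.mem_univ i) (Finset.prod_eq_zero hxi (by ring))
    rw [map_mul, hχeval, hz, mul_zero]
  rw [Finset.sum_eq_single x hterm (fun hxx => absurd hx hxx)]
  have hNne : (∏ i, ∏ s ∈ (S i).erase (x i), (x i - s)) ≠ 0 := by
    rw [Finset.prod_ne_zero_iff]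
    intro i _
    rw [Finset.prod_ne_zero_iff]
    intro s hs
    rw [sub_ne_zero]
    exact fun e => (Finset.mem_erase.mp hs).1 e.symm
  rw [map_mul, hχeval, eval_C, mul_assoc, inv_mul_cancel₀ hNne, mul_one]

end Aux

/-- Let `A ⊆ S` be the zero set on the grid of a polynomial `f` with leading monomial `X^α`
(w.r.t. a monomial order) and individual degrees `< |S i|`.  Every function `g : A → F` is
represented on `A` by a polynomial all of whose monomials lie in `M \ ∇(α)`; consequently
`|A| ≤ |S| - ∏ i (|S i| - α i)`. -/
theorem stmt_10 {F : Type*} [Field F] [DecidableEq F] {m : ℕ}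
    (S : Fin m → Finset F) (ord : MonomialOrder (Fin m))
    (f : MvPolynomial (Fin m) F) (hf : f ≠ 0)
    (hdeg : ∀ i, f.degreeOf i < (S i).card)
    (α : (Fin m) →₀ ℕ) (hα : α ∈ f.support)
    (hlead : ∀ β ∈ f.support, ord.toSyn β ≤ ord.toSyn α) :
    (∀ g : (Fin m → F) → F,
      ∃ P : MvPolynomial (Fin m) F,
        (∀ β ∈ P.support, (∀ i, β i < (S i).card) ∧ ¬ (∀ i, α i ≤ β i)) ∧
        ∀ x ∈ (Fintype.piFinset S).filter (fun x => MvPolynomial.eval x f = 0),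
          MvPolynomial.eval x P = g x) ∧
    ((Fintype.piFinset S).filter (fun x => MvPolynomial.eval x f = 0)).card ≤
      (∏ i, (S i).card) - ∏ i, ((S i).card - α i) := by
  classical
  have part1 : ∀ g : (Fin m → F) → F,
      ∃ P : MvPolynomial (Fin m) F,
        (∀ β ∈ P.support, (∀ i, β i < (S i).card) ∧ ¬ (∀ i, α i ≤ β i)) ∧
        ∀ x ∈ (Fintype.piFinset S).filter (fun x => MvPolynomial.eval x f = 0),
          MvPolynomial.eval x P = g x := by
    intro g
    obtain ⟨Q, hQ⟩ := interp_lemma S g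
    obtain ⟨r, hrs, hre⟩ := reduce_lemma S ord f α hα hlead Q
    refine ⟨r, ?_, ?_⟩
    · intro β hβ
      obtain ⟨h1, h2⟩ := hrs β hβ
      exact ⟨h1, fun hcon => h2 (Finsupp.le_def.mpr hcon)⟩
    · intro x hx
      rw [hre x hx, hQ x (Finset.mem_filter.mp hx).1]
  refine ⟨part1, ?_⟩
  -- counting part
  set A := (Fintype.piFinset S).filter (fun x => MvPolynomial.eval x f = 0) with hA
  set box : Finset (Fin m → ℕ) := Fintype.piFinset fun i => Finset.range (S i).card with hbox
  set T : Finset (Fin m → ℕ) := box.filter (fun β => ¬ ∀ i, α i ≤ β i) with hT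
  set e : (Fin m →₀ ℕ) ≃ (Fin m → ℕ) := Finsupp.equivFunOnFinite with he
  let Φ : ({β // β ∈ T} → F) →ₗ[F] ({x // x ∈ A} → F) :=
    { toFun := fun c x => ∑ β ∈ T.attach,
        c β * MvPolynomial.eval (x : Fin m → F) (monomial (e.symm (β : Fin m → ℕ)) (1 : F)),
      map_add' := by
        intro c₁ c₂
        funext x
        simp [add_mul, Finset.sum_add_distrib]
      map_smul' := by
        intro a c
        funext x
        simp [Finset.mul_sum, mul_assoc] }
  have hsurj : Function.Surjective Φ := by
    intro v
    obtain ⟨P, hPs, hPe⟩ := part1 (fun y => if h : y ∈ A then v ⟨y, h⟩ else 0)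
    refine ⟨fun β => P.coeff (e.symm (β : Fin m → ℕ)), ?_⟩
    funext x
    have hsub : P.support ⊆ T.image e.symm := by
      intro β hβ
      rw [Finset.mem_image]
      refine ⟨e β, ?_, e.symm_apply_apply β⟩
      rw [hT, Finset.mem_filter]
      obtain ⟨h1, h2⟩ := hPs β hβ
      constructor
      · rw [hbox, Fintype.mem_piFinset]
        intro i
        rw [Finset.mem_range]
        exact h1 i
      · exact h2
    have hPsum : ∑ β ∈ T.attach,
        monomial (e.symm (β : Fin m → ℕ)) (P.coeff (e.symm (β : Fin m → ℕ))) = P := by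
      rw [Finset.sum_attach T (fun β => monomial (e.symm β) (P.coeff (e.symm β)))]
      rw [← Finset.sum_image (f := fun γ => monomial γ (P.coeff γ))
        (g := e.symm) (fun x _ y _ h => e.symm.injective h)]
      rw [← Finset.sum_subset hsub (fun γ _ hγ => by
        rw [MvPolynomial.notMem_support_iff.mp hγ, map_zero])]
      exact MvPolynomial.support_sum_monomial_coeff P
    have hx : MvPolynomial.eval (x : Fin m → F) P = v x := by
      have := hPe (x : Fin m → F) x.2
      rw [this, dif_pos x.2]
    calc (Φ (fun β => P.coeff (e.symm (β : Fin m → ℕ)))) x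
        = ∑ β ∈ T.attach, MvPolynomial.eval (x : Fin m → F)
            (monomial (e.symm (β : Fin m → ℕ)) (P.coeff (e.symm (β : Fin m → ℕ)))) := by
          apply Finset.sum_congr rfl
          intro β _
          rw [eval_monomial, eval_monomial, one_mul]
      _ = MvPolynomial.eval (x : Fin m → F) P := by rw [← map_sum, hPsum]
      _ = v x := hx
  have hcard1 : A.card ≤ T.card := by
    have hle := LinearMap.finrank_range_le Φ
    rw [LinearMap.range_eq_top.mpr hsurj, finrank_top] at hle
    rwa [Module.finrank_pi, Module.finrank_pi, Fintype.card_coe, Fintype.card_coe] at hle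
  have hIco : box.filter (fun β => ∀ i, α i ≤ β i)
      = Fintype.piFinset (fun i => Finset.Ico (α i) ((S i).card)) := by
    ext β
    simp only [Finset.mem_filter, hbox, Fintype.mem_piFinset, Finset.mem_range, Finset.mem_Ico]
    rw [forall_and]
    tauto
  have hsplit : (box.filter (fun β => ∀ i, α i ≤ β i)).card + T.card = box.card := by
    rw [hT]
    exact Finset.card_filter_add_card_filter_not _
  have hboxcard : box.card = ∏ i, (S i).card := by
    rw [hbox, Fintype.card_piFinset]
    simp
  have hIcocard : (box.filter (fun β => ∀ i, α i ≤ β i)).card = ∏ i, ((S i).card - α i) := by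
    rw [hIco, Fintype.card_piFinset]
    simp
  rw [hboxcard, hIcocard] at hsplit
  exact le_trans hcard1 (Nat.le_sub_of_add_le (by rw [add_comm]; exact hsplit.le))
end

section
/- Reduction modulo the grid polynomials preserves monomial divisibility: for any polynomial P over F, the unique polynomial P̃ with individual degree in X_i less than k_i agreeing with P on S has the property that every monomial appearing in P̃ divides some monomial appearing in P. -/
open MvPolynomial Finset

/-- A polynomial with individual degrees smaller than the grid sizes that vanishes on the
whole grid is zero. -/
private lemma grid_unique {F : Type*} [Field F] :
    ∀ {m : ℕ} (S : Fin m → Finset F) (Q : MvPolynomial (Fin m) F),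
    (∀ i, Q.degreeOf i < (S i).card) →
    (∀ x ∈ Fintype.piFinset S, MvPolynomial.eval x Q = 0) → Q = 0 := by
  intro m
  induction m with
  | zero =>
    intro S Q hdeg h0
    obtain ⟨c, rfl⟩ := MvPolynomial.C_surjective (Fin 0) Q
    have := h0 (fun i => i.elim0) (by
      rw [Fintype.mem_piFinset]; intro i; exact i.elim0)
    simpa using this
  | succ n ih =>
    intro S Q hdeg h0
    have hq : finSuccEquiv F n Q = 0 := by
      ext j : 1
      apply ih (fun i => S i.succ)
      · intro i
        exact lt_of_le_of_lt (degreeOf_coeff_finSuccEquiv Q i j) (hdeg i.succ)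
      · intro x hx
        have hp : (Polynomial.map (MvPolynomial.eval x) (finSuccEquiv F n Q)) = 0 := by
          apply Polynomial.eq_zero_of_natDegree_lt_card_of_eval_eq_zero' _ (S 0)
          · intro a ha
            rw [← eval_eq_eval_mv_eval']
            apply h0
            rw [Fintype.mem_piFinset]
            intro i
            refine Fin.cases ?_ ?_ i
            · simpa using ha
            · intro j2; simpa using (Fintype.mem_piFinset.mp hx j2)
          · exact (Polynomial.natDegree_map_le).trans_lt
              (by rw [natDegree_finSuccEquiv]; exact hdeg 0)
        have := congrArg (fun p => Polynomial.coeff p j) hp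
        simpa [Polynomial.coeff_map] using this
    have := (finSuccEquiv F n).injective (by simpa using hq)
    simpa using this

/-- Existence of a reduction of a single monomial: small individual degrees, same values on
the grid, and every monomial divides the original one. -/
private lemma exists_red {F : Type*} [Field F] {m : ℕ} (S : Fin m → Finset F)
    (hS : ∀ i, (S i).Nonempty) :
    ∀ (n : ℕ) (β : Fin m →₀ ℕ), (∑ l, β l) ≤ n →
    ∃ Q : MvPolynomial (Fin m) F,
      (∀ δ ∈ Q.support, ∀ i, δ i < (S i).card) ∧
      (∀ x ∈ Fintype.piFinset S,
        MvPolynomial.eval x Q = MvPolynomial.eval x (monomial β (1 : F))) ∧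
      (∀ δ ∈ Q.support, ∀ i, δ i ≤ β i) := by
  classical
  have triv : ∀ β : Fin m →₀ ℕ, (∀ i, β i < (S i).card) →
      ∃ Q : MvPolynomial (Fin m) F,
      (∀ δ ∈ Q.support, ∀ i, δ i < (S i).card) ∧
      (∀ x ∈ Fintype.piFinset S,
        MvPolynomial.eval x Q = MvPolynomial.eval x (monomial β (1 : F))) ∧
      (∀ δ ∈ Q.support, ∀ i, δ i ≤ β i) := by
    intro β hsmall
    refine ⟨monomial β 1, ?_, fun x _ => rfl, ?_⟩ <;>
    · intro δ hδ i
      rw [support_monomial, if_neg one_ne_zero, Finset.mem_singleton] at hδ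
      subst hδ
      first
        | exact hsmall i
        | exact le_rfl
  intro n
  induction n with
  | zero =>
    intro β hβ
    refine triv β fun i => ?_
    have h0 : β i = 0 := by
      have := Finset.sum_eq_zero_iff.mp (Nat.le_zero.mp hβ) i (Finset.mem_univ i)
      exact this
    rw [h0]
    exact Finset.card_pos.mpr (hS i)
  | succ n ih =>
    intro β hβ
    by_cases hall : ∀ i, β i < (S i).card
    · exact triv β hall
    push_neg at hall
    obtain ⟨i, hik⟩ := hall
    set k := (S i).card with hk
    have hkpos : 0 < k := Finset.card_pos.mpr (hS i)
    set β' : Fin m →₀ ℕ := β - Finsupp.single i k with hβ'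
    have hβ'app : ∀ l, β' l = β l - (Finsupp.single i k) l := fun l => Finsupp.tsub_apply _ _ _
    have hsplit : β' + Finsupp.single i k = β := by
      ext l
      rw [Finsupp.add_apply, hβ'app]
      rcases eq_or_ne l i with rfl | hne
      · rw [Finsupp.single_eq_same]
        have hik' : k ≤ β l := hik
        omega
      · simp [Finsupp.single_apply, hne.symm, Ne.symm]
    -- the single variable polynomials
    set p : Polynomial F := ∏ a ∈ S i, (Polynomial.X - Polynomial.C a) with hp
    have hp_monic : p.Monic :=
      Polynomial.monic_prod_of_monic _ _ fun a _ => Polynomial.monic_X_sub_C a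
    have hp_deg : p.natDegree = k := by
      rw [hp, Polynomial.natDegree_prod_of_monic _ _ fun a _ => Polynomial.monic_X_sub_C a]
      simp [Polynomial.natDegree_X_sub_C, hk]
    set g1 : Polynomial F := Polynomial.X ^ k - p with hg1def
    have hg1 : g1.natDegree < k := by
      by_cases hg0 : g1 = 0
      · rw [hg0]; simpa using hkpos
      · rw [Polynomial.natDegree_lt_iff_degree_lt hg0]
        have : g1.degree < (Polynomial.X ^ k : Polynomial F).degree := by
          apply Polynomial.degree_sub_lt
          · rw [Polynomial.degree_X_pow, Polynomial.degree_eq_natDegree hp_monic.ne_zero, hp_deg]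
          · exact pow_ne_zero _ Polynomial.X_ne_zero
          · simp [hp_monic.leadingCoeff]
        rwa [Polynomial.degree_X_pow] at this
    set f : MvPolynomial (Fin m) F := ∏ a ∈ S i, (X i - C a) with hf
    have haeval : Polynomial.aeval (X i : MvPolynomial (Fin m) F) p = f := by
      rw [hp, hf, map_prod]
      refine Finset.prod_congr rfl fun a _ => ?_
      rw [map_sub, Polynomial.aeval_X, Polynomial.aeval_C, algebraMap_eq]
    have hf0 : ∀ x ∈ Fintype.piFinset S, MvPolynomial.eval x f = 0 := by
      intro x hx
      rw [hf, map_prod]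
      refine Finset.prod_eq_zero (Fintype.mem_piFinset.mp hx i) ?_
      simp
    -- decomposition of the monomial
    have h2 : (X i : MvPolynomial (Fin m) F) ^ k
        = f + Polynomial.aeval (X i : MvPolynomial (Fin m) F) g1 := by
      rw [hg1def, map_sub, haeval, map_pow, Polynomial.aeval_X]
      ring
    have h3 : Polynomial.aeval (X i : MvPolynomial (Fin m) F) g1
        = ∑ j ∈ Finset.range k, C (g1.coeff j) * (X i) ^ j := by
      rw [Polynomial.aeval_eq_sum_range' hg1]
      exact Finset.sum_congr rfl fun j _ => by rw [smul_eq_C_mul]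
    have hmono : (monomial β (1 : F))
        = monomial β' 1 * f
          + ∑ j ∈ Finset.range k, monomial (β' + Finsupp.single i j) (g1.coeff j) := by
      have h1 : (monomial β (1 : F)) = monomial β' 1 * (X i) ^ k := by
        rw [X_pow_eq_monomial, monomial_mul, mul_one, hsplit]
      rw [h1, h2, h3, mul_add, Finset.mul_sum]
      congr 1
      refine Finset.sum_congr rfl fun j _ => ?_
      rw [X_pow_eq_monomial, C_mul_monomial, mul_one, monomial_mul, one_mul]
    -- apply the induction hypothesis to each new monomial
    have hδle : ∀ j < k, ∀ l, (β' + Finsupp.single i j) l ≤ β l := by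
      intro j hj l
      rw [Finsupp.add_apply, hβ'app]
      rcases eq_or_ne l i with rfl | hne
      · rw [Finsupp.single_eq_same, Finsupp.single_eq_same]
        have hik' : k ≤ β l := hik
        omega
      · simp [Finsupp.single_apply, hne.symm, Ne.symm]
    have hδlt : ∀ j < k, (β' + Finsupp.single i j) i < β i := by
      intro j hj
      rw [Finsupp.add_apply, hβ'app]
      rw [Finsupp.single_eq_same, Finsupp.single_eq_same]
      have hik' : k ≤ β i := hik
      omega
    have hsum : ∀ j ∈ Finset.range k, (∑ l, (β' + Finsupp.single i j) l) ≤ n := by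
      intro j hj
      rw [Finset.mem_range] at hj
      have : (∑ l, (β' + Finsupp.single i j) l) < ∑ l, β l :=
        Finset.sum_lt_sum (fun l _ => hδle j hj l) ⟨i, Finset.mem_univ i, hδlt j hj⟩
      omega
    choose Qf hQf1 hQf2 hQf3 using
      fun (j : Finset.range k) => ih (β' + Finsupp.single i (j : ℕ)) (hsum j j.2)
    refine ⟨∑ j ∈ (Finset.range k).attach, C (g1.coeff j) * Qf j, ?_, ?_, ?_⟩
    · intro δ hδ l
      obtain ⟨j, _, hj2⟩ := Finset.mem_biUnion.mp (MvPolynomial.support_sum hδ)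
      rw [← smul_eq_C_mul] at hj2
      exact hQf1 j δ (Finsupp.support_smul hj2) l
    · intro x hx
      rw [hmono, map_add, map_mul, hf0 x hx, mul_zero, zero_add, map_sum, map_sum]
      rw [← Finset.sum_attach (Finset.range k)
        (fun j => MvPolynomial.eval x (monomial (β' + Finsupp.single i j) (g1.coeff j)))]
      refine Finset.sum_congr rfl fun j _ => ?_
      rw [map_mul, eval_C, hQf2 j x hx]
      have : (monomial (β' + Finsupp.single i (j : ℕ)) (g1.coeff j))
          = C (g1.coeff j) * monomial (β' + Finsupp.single i (j : ℕ)) 1 := by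
        rw [C_mul_monomial, mul_one]
      rw [this, map_mul, eval_C]
    · intro δ hδ l
      obtain ⟨j, _, hj2⟩ := Finset.mem_biUnion.mp (MvPolynomial.support_sum hδ)
      rw [← smul_eq_C_mul] at hj2
      have hjlt : (j : ℕ) < k := Finset.mem_range.mp j.2
      exact (hQf3 j δ (Finsupp.support_smul hj2) l).trans (hδle j hjlt l)

/-- Reduction modulo the grid polynomials preserves monomial divisibility: if `P̃` has
individual degree in `X i` less than `|S i|` for each `i` and agrees with `P` at every point of
the grid `S`, then every monomial appearing in `P̃` divides some monomial appearing in `P`. -/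
theorem stmt_11 {F : Type*} [Field F] {m : ℕ} (S : Fin m → Finset F)
    (hS : ∀ i, (S i).Nonempty)
    (P Ptilde : MvPolynomial (Fin m) F)
    (hdeg : ∀ i, Ptilde.degreeOf i < (S i).card)
    (hagree : ∀ x ∈ Fintype.piFinset S,
      MvPolynomial.eval x Ptilde = MvPolynomial.eval x P) :
    ∀ β ∈ Ptilde.support, ∃ γ ∈ P.support, ∀ i, β i ≤ γ i := by
  classical
  choose Qf hQf1 hQf2 hQf3 using
    fun (γ : Fin m →₀ ℕ) => exists_red S hS (∑ l, γ l) γ le_rfl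
  set Q : MvPolynomial (Fin m) F := ∑ γ ∈ P.support, C (P.coeff γ) * Qf γ with hQ
  have key : Ptilde = Q := by
    rw [← sub_eq_zero]
    apply grid_unique S
    · intro i
      rw [MvPolynomial.degreeOf_lt_iff (Finset.card_pos.mpr (hS i))]
      intro δ hδ
      rcases Finset.mem_union.mp (MvPolynomial.support_sub _ _ _ hδ) with h | h
      · exact lt_of_le_of_lt (MvPolynomial.monomial_le_degreeOf i h) (hdeg i)
      · obtain ⟨γ, _, hγ2⟩ := Finset.mem_biUnion.mp (MvPolynomial.support_sum h)
        rw [← smul_eq_C_mul] at hγ2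
        exact hQf1 γ δ (Finsupp.support_smul hγ2) i
    · intro x hx
      rw [map_sub, hagree x hx, sub_eq_zero, hQ, map_sum]
      conv_lhs => rw [← MvPolynomial.support_sum_monomial_coeff P, map_sum]
      refine Finset.sum_congr rfl fun γ _ => ?_
      rw [map_mul, eval_C, hQf2 γ x hx]
      have : (monomial γ (P.coeff γ)) = C (P.coeff γ) * monomial γ 1 := by
        rw [C_mul_monomial, mul_one]
      rw [this, map_mul, eval_C]
  intro β hβ
  rw [key, hQ] at hβ
  obtain ⟨γ, hγ1, hγ2⟩ := Finset.mem_biUnion.mp (MvPolynomial.support_sum hβ)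
  rw [← smul_eq_C_mul] at hγ2
  exact ⟨γ, hγ1, fun i => hQf3 γ β (Finsupp.support_smul hγ2) i⟩
end

section
/- Suppose w_i is a weighted word on S = S̃ × S_m, C_i(X,Y) = Σ_{j=i}^d P_j(X) Y^{d-j} with Δ(w_i, C_i) < μ(S,D)/2, and for each x ∈ S̃ a Reed-Solomon weighted decoding on the column w_{i,x} produces G_x with the convention of the Kim–Kopparty column step. Then the resulting weighted word f_i on S̃ satisfies Δ(f_i, P_i) ≤ Δ(w_i, C_i) / μ(S_m, {0,...,d-i}) < μ(S̃, D_{d-i})/2. -/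
open MvPolynomial

/-- Weighted distance of the weighted word `(r, u)` on `T` to the function `g`. -/
noncomputable def wDist {F : Type*} [DecidableEq F] {σ : Type*}
    (T : Finset σ) (r : σ → F) (u : σ → ℝ) (g : σ → F) : ℝ :=
  ∑ x ∈ T, if r x = g x then u x / 2 else 1 - u x / 2

section KKAux1
open Finset Pointwise

lemma snoc_sum {F : Type*} [DecidableEq F] {m : ℕ} {M : Type*} [AddCommMonoid M]
    (S : Fin (m + 1) → Finset F) (f : (Fin (m + 1) → F) → M) :
    ∑ z ∈ Fintype.piFinset S, f z =
      ∑ x ∈ Fintype.piFinset (fun t : Fin m => S t.castSucc), ∑ y ∈ S (Fin.last m),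
        f (Fin.snoc x y) := by
  rw [← Finset.sum_product']
  refine Finset.sum_nbij' (fun z => (Fin.init z, z (Fin.last m)))
    (fun p => Fin.snoc p.1 p.2) ?_ ?_ ?_ ?_ ?_
  · intro z hz
    simp only [Fintype.mem_piFinset] at hz
    simp only [Finset.mem_product, Fintype.mem_piFinset]
    exact ⟨fun t => hz _, hz _⟩
  · intro p hp
    simp only [Finset.mem_product, Fintype.mem_piFinset] at hp
    simp only [Fintype.mem_piFinset]
    intro t
    refine Fin.lastCases ?_ ?_ t
    · simpa using hp.2
    · intro s; simpa using hp.1 s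
  · intro z hz; exact Fin.snoc_init_self z
  · intro p hp; ext
    · simp [Fin.init_snoc]
    · simp
  · intro z hz; rw [Fin.snoc_init_self]


lemma muDist_mul_le {F : Type*} [Field F] [DecidableEq F] {m : ℕ}
    (S : Fin (m + 1) → Finset F) (hS : ∀ t, (S t).Nonempty)
    (D : Set (Fin (m + 1) → ℕ))
    (hdown : ∀ α ∈ D, ∀ β : Fin (m + 1) → ℕ, (∀ t, β t ≤ α t) → β ∈ D)
    (e : ℕ) (he : e < (S (Fin.last m)).card)
    (h0 : Fin.snoc (fun _ => (0:ℕ)) e ∈ D) :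
    muDist S D ≤ ((S (Fin.last m)).card - e) *
      muDist (fun t : Fin m => S t.castSucc) {β : Fin m → ℕ | Fin.snoc β e ∈ D} := by
  classical
  set D' : Set (Fin m → ℕ) := {β : Fin m → ℕ | Fin.snoc β e ∈ D} with hD'
  set S' : Fin m → Finset F := fun t : Fin m => S t.castSucc with hS'
  -- the defining set for muDist S' D' is nonempty
  have hne : {w : ℕ | ∃ P : MvPolynomial (Fin m) F,
      (∀ β ∈ P.support, ⇑β ∈ D') ∧
      (∃ x ∈ Fintype.piFinset S', MvPolynomial.eval x P ≠ 0) ∧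
      w = ((Fintype.piFinset S').filter
        (fun x => MvPolynomial.eval x P ≠ 0)).card}.Nonempty := by
    refine ⟨_, (1 : MvPolynomial (Fin m) F), ?_, ?_, rfl⟩
    · intro β hβ
      have h1 : (1 : MvPolynomial (Fin m) F) = monomial 0 1 := by
        rw [← C_1, C_apply]
      rw [h1] at hβ
      have hβ0 : β = 0 := Finset.mem_singleton.1 (support_monomial_subset hβ)
      subst hβ0
      simp only [hD', Set.mem_setOf_eq, Finsupp.coe_zero]; exact h0
    · obtain ⟨x, hx⟩ := (Fintype.piFinset_nonempty (s := S')).mpr (fun t => hS _)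
      exact ⟨x, hx, by simp⟩
  obtain ⟨Q, hQsupp, ⟨x0, hx0, hx0ne⟩, hQcard⟩ := Nat.sInf_mem hne
  -- T : e points of S_m to kill
  obtain ⟨T, hTsub, hTcard⟩ := Finset.exists_subset_card_eq he.le
  set V : Polynomial F := ∏ y ∈ T, (Polynomial.X - Polynomial.C y) with hV
  have hVdeg : V.natDegree = e := by
    rw [hV, Polynomial.natDegree_prod]
    · simp [hTcard]
    · intro y _; exact Polynomial.X_sub_C_ne_zero y
  have hVeval : ∀ y : F, Polynomial.eval y V = 0 ↔ y ∈ T := by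
    intro y
    rw [hV, Polynomial.eval_prod, Finset.prod_eq_zero_iff]
    constructor
    · rintro ⟨t, ht, h⟩
      simp only [Polynomial.eval_sub, Polynomial.eval_X, Polynomial.eval_C] at h
      rwa [sub_eq_zero.1 h]
    · intro hy; exact ⟨y, hy, by simp⟩
  set W : MvPolynomial (Fin (m + 1)) F :=
    ∑ k ∈ Finset.range (e + 1),
      monomial (Finsupp.single (Fin.last m) k) (V.coeff k) with hW
  have hWeval : ∀ z : Fin (m + 1) → F, eval z W = Polynomial.eval (z (Fin.last m)) V := by
    intro z
    rw [hW, map_sum, Polynomial.eval_eq_sum_range' (by omega : V.natDegree < e + 1)]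
    refine Finset.sum_congr rfl fun k _ => ?_
    rw [eval_monomial, Finsupp.prod_single_index (by simp)]
  set R : MvPolynomial (Fin (m + 1)) F := rename Fin.castSucc Q * W with hR
  have hReval : ∀ z : Fin (m + 1) → F,
      eval z R = eval (fun t : Fin m => z t.castSucc) Q * Polynomial.eval (z (Fin.last m)) V := by
    intro z
    rw [hR, map_mul, eval_rename, hWeval]
    rfl
  -- support of R lands in D
  have hRsupp : ∀ γ ∈ R.support, ⇑γ ∈ D := by
    intro γ hγ
    have h1 : γ ∈ (rename (Fin.castSucc (n := m)) Q).support + W.support :=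
      MvPolynomial.support_mul _ _ hγ
    rw [Finset.mem_add] at h1
    obtain ⟨a, ha, b, hb, rfl⟩ := h1
    rw [support_rename_of_injective (Fin.castSucc_injective m), Finset.mem_image] at ha
    obtain ⟨β, hβ, rfl⟩ := ha
    have hb' : ∃ k ≤ e, b = Finsupp.single (Fin.last m) k := by
      have := MvPolynomial.support_sum hb
      rw [Finset.mem_biUnion] at this
      obtain ⟨k, hk, hbk⟩ := this
      have := support_monomial_subset hbk
      rw [Finset.mem_singleton] at this
      exact ⟨k, by simpa using Nat.lt_succ_iff.1 (Finset.mem_range.1 hk), this⟩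
    obtain ⟨k, hk, rfl⟩ := hb'
    refine hdown (Fin.snoc ⇑β e) (hQsupp β hβ) _ ?_
    intro t
    refine Fin.lastCases ?_ ?_ t
    · rw [Fin.snoc_last]
      simp only [Finsupp.coe_add, Pi.add_apply]
      rw [Finsupp.mapDomain_notin_range]
      · simpa using hk
      · rintro ⟨s, hs⟩
        exact absurd hs (Fin.castSucc_lt_last s).ne
    · intro s
      simp only [Finsupp.coe_add, Pi.add_apply, Fin.snoc_castSucc]
      have h2 : (Finsupp.single (Fin.last m) k) s.castSucc = 0 :=
        Finsupp.single_eq_of_ne (Fin.castSucc_lt_last s).ne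
      rw [Finsupp.mapDomain_apply (Fin.castSucc_injective m), h2]
      simp
  -- weight of R
  have hweight : ((Fintype.piFinset S).filter (fun z => eval z R ≠ 0)).card =
      ((S (Fin.last m)).card - e) *
        ((Fintype.piFinset S').filter (fun x => eval x Q ≠ 0)).card := by
    rw [Finset.card_filter, snoc_sum]
    have hinner : ∀ x ∈ Fintype.piFinset S',
        (∑ y ∈ S (Fin.last m), if eval (Fin.snoc x y) R ≠ 0 then 1 else 0) =
          if eval x Q ≠ 0 then (S (Fin.last m)).card - e else 0 := by
      intro x hx
      have hcol : ∀ y, eval (Fin.snoc x y) R = eval x Q * Polynomial.eval y V := by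
        intro y
        rw [hReval]
        simp [Fin.snoc_castSucc, Fin.snoc_last]
      by_cases hQx : eval x Q = 0
      · simp [hcol, hQx]
      · rw [if_pos hQx]
        calc (∑ y ∈ S (Fin.last m), if eval (Fin.snoc x y) R ≠ 0 then 1 else 0)
            = ∑ y ∈ S (Fin.last m), if y ∉ T then 1 else 0 := by
              refine Finset.sum_congr rfl fun y _ => ?_
              congr 1
              simp only [hcol, ne_eq, mul_eq_zero, hQx, false_or, eq_iff_iff]
              rw [not_iff_not, hVeval]
          _ = ((S (Fin.last m)).filter (fun y => y ∉ T)).card :=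
              (Finset.card_filter _ _).symm
          _ = ((S (Fin.last m)) \ T).card := by rw [Finset.sdiff_eq_filter]
          _ = (S (Fin.last m)).card - e := by rw [Finset.card_sdiff_of_subset hTsub, hTcard]
    rw [Finset.sum_congr rfl hinner, Finset.sum_ite, Finset.sum_const, Finset.sum_const,
      smul_eq_mul, smul_eq_mul, mul_zero, add_zero, Finset.card_filter, mul_comm]
  -- R is a nonzero codeword
  have hwin : (((S (Fin.last m)).card - e) *
      ((Fintype.piFinset S').filter (fun x => eval x Q ≠ 0)).card) ∈
      {w : ℕ | ∃ P : MvPolynomial (Fin (m+1)) F,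
        (∀ β ∈ P.support, ⇑β ∈ D) ∧
        (∃ x ∈ Fintype.piFinset S, MvPolynomial.eval x P ≠ 0) ∧
        w = ((Fintype.piFinset S).filter (fun x => MvPolynomial.eval x P ≠ 0)).card} := by
    refine ⟨R, hRsupp, ?_, hweight.symm⟩
    obtain ⟨y0, hy0⟩ : ((S (Fin.last m)) \ T).Nonempty := by
      rw [← Finset.card_pos, Finset.card_sdiff_of_subset hTsub, hTcard]
      omega
    rw [Finset.mem_sdiff] at hy0
    refine ⟨Fin.snoc x0 y0, ?_, ?_⟩
    · rw [Fintype.mem_piFinset]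
      intro t
      refine Fin.lastCases ?_ ?_ t
      · simpa using hy0.1
      · intro s
        rw [Fin.snoc_castSucc]
        simpa using Fintype.mem_piFinset.1 hx0 s
    · rw [hReval]
      have hx0' : (fun t : Fin m => (Fin.snoc x0 y0 : Fin (m+1) → F) t.castSucc) = x0 := by
        funext s; rw [Fin.snoc_castSucc]
      rw [hx0', Fin.snoc_last]
      exact mul_ne_zero hx0ne (fun h => hy0.2 ((hVeval y0).1 h))
  have := Nat.sInf_le hwin
  rw [muDist, muDist, hQcard]
  exact this

end KKAux1

section KKAux2
open Polynomial Finset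

lemma wDist_nonneg {F : Type*} [DecidableEq F] {σ : Type*}
    {T : Finset σ} {r : σ → F} {u : σ → ℝ} (g : σ → F)
    (hu : ∀ x ∈ T, 0 ≤ u x ∧ u x ≤ 1) : 0 ≤ wDist T r u g := by
  refine Finset.sum_nonneg fun x hx => ?_
  rcases hu x hx with ⟨h0, h1⟩
  split <;> linarith

lemma wDist_congr {F : Type*} [DecidableEq F] {σ : Type*}
    (T : Finset σ) (r : σ → F) (u : σ → ℝ) {g g' : σ → F}
    (h : ∀ x ∈ T, g x = g' x) : wDist T r u g = wDist T r u g' := by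
  refine Finset.sum_congr rfl fun x hx => ?_
  rw [h x hx]

-- agreement of distinct polynomials bounded by degree
lemma agree_card_le {F : Type*} [Field F] [DecidableEq F] {p q : F[X]} {e : ℕ}
    (hp : p.natDegree ≤ e) (hq : q.natDegree ≤ e) (hne : p ≠ q) (T : Finset F) :
    (T.filter (fun y => p.eval y = q.eval y)).card ≤ e := by
  have hsub : p - q ≠ 0 := sub_ne_zero.2 hne
  have hdeg : (p - q).natDegree ≤ e := le_trans (natDegree_sub_le p q) (max_le hp hq)
  calc (T.filter (fun y => p.eval y = q.eval y)).card
      ≤ (p - q).roots.toFinset.card := by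
        apply Finset.card_le_card
        intro y hy
        simp only [Finset.mem_filter] at hy
        simp only [Multiset.mem_toFinset, mem_roots hsub, IsRoot.def, Polynomial.eval_sub]
        exact sub_eq_zero.2 hy.2
    _ ≤ Multiset.card (p - q).roots := Multiset.toFinset_card_le _
    _ ≤ (p - q).natDegree := card_roots' _
    _ ≤ e := hdeg

-- triangle-type bound
lemma wDist_add_ge {F : Type*} [DecidableEq F] {σ : Type*}
    (T : Finset σ) (r : σ → F) (u : σ → ℝ)
    (hu : ∀ x ∈ T, 0 ≤ u x ∧ u x ≤ 1) (g h : σ → F) :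
    ((T.filter (fun y => g y ≠ h y)).card : ℝ) ≤ wDist T r u g + wDist T r u h := by
  rw [wDist, wDist, ← Finset.sum_add_distrib]
  have : ((T.filter (fun y => g y ≠ h y)).card : ℝ)
      = ∑ x ∈ T, if g x = h x then (0:ℝ) else 1 := by
    rw [Finset.sum_ite, Finset.sum_const, Finset.sum_const]
    simp [Finset.filter_not]
  rw [this]
  refine Finset.sum_le_sum fun x hx => ?_
  rcases hu x hx with ⟨h0, h1⟩
  by_cases hgh : g x = h x
  · rw [if_pos hgh]
    split <;> split <;> linarith
  · rw [if_neg hgh]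
    by_cases h1' : r x = g x
    · rw [if_pos h1', if_neg (fun h2' => hgh (h1' ▸ h2'))]
      linarith
    · rw [if_neg h1']
      split <;> linarith

lemma column_step {F : Type*} [Field F] [DecidableEq F] (T : Finset F)
    (r : F → F) (u : F → ℝ) (hu : ∀ y ∈ T, 0 ≤ u y ∧ u y ≤ 1)
    (e : ℕ) (he : e < T.card) (Cp G : F[X])
    (hCdeg : Cp.natDegree ≤ e) (hGdeg : G.natDegree ≤ e) (σ : F) (δ : ℝ)
    (hdec : (∃ Q : F[X], Q.natDegree ≤ e ∧
        wDist T r u (fun y => Q.eval y) < (((T.card : ℝ) - e)) / 2) →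
      wDist T r u (fun y => G.eval y) < (((T.card : ℝ) - e)) / 2)
    (hsucc : wDist T r u (fun y => G.eval y) < (((T.card : ℝ) - e)) / 2 →
      σ = G.coeff e ∧ δ = wDist T r u (fun y => G.eval y))
    (hfail : ¬ wDist T r u (fun y => G.eval y) < (((T.card : ℝ) - e)) / 2 →
      σ = 0 ∧ δ = (((T.card : ℝ) - e)) / 2) :
    (if σ = Cp.coeff e then (δ / ((((T.card : ℝ) - e)) / 2)) / 2
      else 1 - (δ / ((((T.card : ℝ) - e)) / 2)) / 2) ≤
    wDist T r u (fun y => Cp.eval y) / ((T.card : ℝ) - e) := by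
  set μ : ℝ := (T.card : ℝ) - e with hμdef
  have hμ : 0 < μ := by
    have : (e : ℝ) < (T.card : ℝ) := by exact_mod_cast he
    linarith
  set Δ : ℝ := wDist T r u (fun y => Cp.eval y) with hΔdef
  have hΔ0 : 0 ≤ Δ := wDist_nonneg _ hu
  have key : G ≠ Cp → μ ≤ wDist T r u (fun y => G.eval y) + Δ := by
    intro hne
    have h1 := wDist_add_ge T r u hu (fun y => G.eval y) (fun y => Cp.eval y)
    have h2 : (T.filter (fun y => G.eval y = Cp.eval y)).card ≤ e :=
      agree_card_le hGdeg hCdeg hne T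
    have h3 : (T.filter (fun y => G.eval y ≠ Cp.eval y)).card
        + (T.filter (fun y => G.eval y = Cp.eval y)).card = T.card := by
      rw [add_comm]
      exact Finset.card_filter_add_card_filter_not _
    have h4 : (T.card : ℝ) - e ≤ (T.filter (fun y => G.eval y ≠ Cp.eval y)).card := by
      have := h2
      have h5 : T.card ≤ (T.filter (fun y => G.eval y ≠ Cp.eval y)).card + e := by omega
      have := (Nat.cast_le (α := ℝ)).2 h5
      push_cast at this ⊢
      linarith
    linarith
  have hsimp : ∀ a : ℝ, (a / (μ / 2)) / 2 = a / μ := by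
    intro a; field_simp
  by_cases hG : wDist T r u (fun y => G.eval y) < μ / 2
  · obtain ⟨hσ, hδ⟩ := hsucc hG
    by_cases hGC : G = Cp
    · subst hGC
      rw [if_pos hσ, hsimp, hδ]
    · have hk := key hGC
      by_cases hσC : σ = Cp.coeff e
      · rw [if_pos hσC, hsimp]
        rw [hδ]
        gcongr
        linarith
      · rw [if_neg hσC]
        have h1 : 1 - δ / μ = (μ - δ) / μ := by field_simp
        rw [hsimp, h1]
        gcongr
        linarith
  · obtain ⟨hσ, hδ⟩ := hfail hG
    have hΔge : μ / 2 ≤ Δ := by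
      by_contra hlt
      push_neg at hlt
      exact hG (hdec ⟨Cp, hCdeg, hlt⟩)
    have hhalf : (1 : ℝ) / 2 ≤ Δ / μ := by
      rw [le_div_iff₀ hμ]; linarith
    rw [hδ]
    have e1 : ((μ/2) / (μ / 2)) / 2 = 1/2 := by field_simp
    split <;> rw [e1] <;> linarith


end KKAux2

/-- Correctness of one outer step of the Kim–Kopparty decoder for downset codes: if the weighted
word `w_i` is within `μ(S,D)/2` of `C_i(X,Y) = Σ_{j=i}^d P_j(X) Y^{d-j}`, and each column
`w_{i,x}` is decoded by a weighted Reed–Solomon decoder (with the Kim–Kopparty convention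
producing the weighted symbol `f_i(x) = (σ_x, δ_x/(μ_RS/2))`, where `μ_RS = |S_m| - (d-i)`),
then `Δ(f_i, P_i) ≤ Δ(w_i, C_i)/μ_RS < μ(S̃, D_{d-i})/2`. -/
theorem stmt_14 {F : Type*} [Field F] [DecidableEq F] {m : ℕ}
    (S : Fin (m + 1) → Finset F) (hS : ∀ t, (S t).Nonempty)
    (D : Set (Fin (m + 1) → ℕ))
    (hDM : ∀ α ∈ D, ∀ t, α t < (S t).card)
    (hdown : ∀ α ∈ D, ∀ β : Fin (m + 1) → ℕ, (∀ t, β t ≤ α t) → β ∈ D)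
    (d : ℕ) (hd : IsGreatest {j | ∃ α ∈ D, α (Fin.last m) = j} d)
    (i : ℕ) (hi : i ≤ d)
    (r : (Fin (m + 1) → F) → F) (u : (Fin (m + 1) → F) → ℝ)
    (hu : ∀ z ∈ Fintype.piFinset S, 0 ≤ u z ∧ u z ≤ 1)
    (P : ℕ → MvPolynomial (Fin m) F)
    (hP : ∀ j, i ≤ j → j ≤ d → ∀ β ∈ (P j).support, Fin.snoc ⇑β (d - j) ∈ D)
    (hclose : wDist (Fintype.piFinset S) r u
        (fun z => ∑ j ∈ Finset.Icc i d,
          MvPolynomial.eval (fun t : Fin m => z t.castSucc) (P j) * z (Fin.last m) ^ (d - j)) <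
      (muDist S D : ℝ) / 2)
    (G : (Fin m → F) → Polynomial F)
    (hGdeg : ∀ x, (G x).natDegree ≤ d - i)
    (hdec : ∀ x ∈ Fintype.piFinset (fun t : Fin m => S t.castSucc),
      (∃ Q : Polynomial F, Q.natDegree ≤ d - i ∧
          wDist (S (Fin.last m)) (fun y => r (Fin.snoc x y)) (fun y => u (Fin.snoc x y))
              (fun y => Q.eval y) <
            (((S (Fin.last m)).card : ℝ) - (d - i : ℕ)) / 2) →
      wDist (S (Fin.last m)) (fun y => r (Fin.snoc x y)) (fun y => u (Fin.snoc x y))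
          (fun y => (G x).eval y) <
        (((S (Fin.last m)).card : ℝ) - (d - i : ℕ)) / 2)
    (σ : (Fin m → F) → F) (δ : (Fin m → F) → ℝ)
    (hsucc : ∀ x ∈ Fintype.piFinset (fun t : Fin m => S t.castSucc),
      wDist (S (Fin.last m)) (fun y => r (Fin.snoc x y)) (fun y => u (Fin.snoc x y))
          (fun y => (G x).eval y) <
        (((S (Fin.last m)).card : ℝ) - (d - i : ℕ)) / 2 →
      σ x = (G x).coeff (d - i) ∧
      δ x = wDist (S (Fin.last m)) (fun y => r (Fin.snoc x y)) (fun y => u (Fin.snoc x y))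
          (fun y => (G x).eval y))
    (hfail : ∀ x ∈ Fintype.piFinset (fun t : Fin m => S t.castSucc),
      ¬ wDist (S (Fin.last m)) (fun y => r (Fin.snoc x y)) (fun y => u (Fin.snoc x y))
          (fun y => (G x).eval y) <
        (((S (Fin.last m)).card : ℝ) - (d - i : ℕ)) / 2 →
      σ x = 0 ∧ δ x = (((S (Fin.last m)).card : ℝ) - (d - i : ℕ)) / 2) :
    (∑ x ∈ Fintype.piFinset (fun t : Fin m => S t.castSucc),
        (if σ x = MvPolynomial.eval x (P i) then
            (δ x / ((((S (Fin.last m)).card : ℝ) - (d - i : ℕ)) / 2)) / 2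
          else 1 - (δ x / ((((S (Fin.last m)).card : ℝ) - (d - i : ℕ)) / 2)) / 2)) ≤
      wDist (Fintype.piFinset S) r u
          (fun z => ∑ j ∈ Finset.Icc i d,
            MvPolynomial.eval (fun t : Fin m => z t.castSucc) (P j) * z (Fin.last m) ^ (d - j)) /
        (((S (Fin.last m)).card : ℝ) - (d - i : ℕ)) ∧
    wDist (Fintype.piFinset S) r u
        (fun z => ∑ j ∈ Finset.Icc i d,
          MvPolynomial.eval (fun t : Fin m => z t.castSucc) (P j) * z (Fin.last m) ^ (d - j)) /
      (((S (Fin.last m)).card : ℝ) - (d - i : ℕ)) <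
      (muDist (fun t : Fin m => S t.castSucc)
        {β : Fin m → ℕ | Fin.snoc β (d - i) ∈ D} : ℝ) / 2 := by
    classical
  obtain ⟨α0, hα0D, hα0d⟩ := hd.1
  have hdlt : d < (S (Fin.last m)).card := hα0d ▸ hDM α0 hα0D (Fin.last m)
  set e : ℕ := d - i with hedef
  have he : e < (S (Fin.last m)).card := lt_of_le_of_lt (Nat.sub_le d i) hdlt
  set μ : ℝ := ((S (Fin.last m)).card : ℝ) - (e : ℕ) with hμdef
  have hμpos : 0 < μ := by
    have : (e : ℝ) < ((S (Fin.last m)).card : ℝ) := by exact_mod_cast he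
    simp only [hμdef]
    linarith
  set S' : Fin m → Finset F := fun t : Fin m => S t.castSucc with hS'def
  set Cp : (Fin m → F) → Polynomial F := fun x => ∑ j ∈ Finset.Icc i d,
      Polynomial.C (MvPolynomial.eval x (P j)) * Polynomial.X ^ (d - j) with hCpdef
  have hCpdeg : ∀ x, (Cp x).natDegree ≤ e := by
    intro x
    refine Polynomial.natDegree_sum_le_of_forall_le _ _ fun j hj => ?_
    refine le_trans (Polynomial.natDegree_C_mul_X_pow_le _ _) ?_
    exact Nat.sub_le_sub_left (Finset.mem_Icc.1 hj).1 d
  have hCpcoeff : ∀ x, (Cp x).coeff e = MvPolynomial.eval x (P i) := by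
    intro x
    rw [hCpdef]
    rw [Polynomial.finset_sum_coeff]
    rw [Finset.sum_eq_single i]
    · rw [Polynomial.coeff_C_mul, Polynomial.coeff_X_pow, if_pos rfl, mul_one]
    · intro j hj hji
      rw [Polynomial.coeff_C_mul, Polynomial.coeff_X_pow, if_neg, mul_zero]
      have hj' := Finset.mem_Icc.1 hj
      omega
    · intro h
      exact absurd (Finset.mem_Icc.2 ⟨le_refl i, hi⟩) h
  have hCpeval : ∀ (x : Fin m → F) (y : F),
      (Cp x).eval y = ∑ j ∈ Finset.Icc i d,
        MvPolynomial.eval (fun t : Fin m => (Fin.snoc x y : Fin (m+1) → F) t.castSucc) (P j) *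
          (Fin.snoc x y : Fin (m+1) → F) (Fin.last m) ^ (d - j) := by
    intro x y
    have hfn : (fun t : Fin m => (Fin.snoc x y : Fin (m+1) → F) t.castSucc) = x := by
      funext s; rw [Fin.snoc_castSucc]
    rw [hCpdef, Polynomial.eval_finset_sum]
    refine Finset.sum_congr rfl fun j hj => ?_
    rw [Polynomial.eval_mul, Polynomial.eval_C, Polynomial.eval_pow, Polynomial.eval_X, hfn,
      Fin.snoc_last]
  have hsnocmem : ∀ x ∈ Fintype.piFinset S', ∀ y ∈ S (Fin.last m),
      Fin.snoc x y ∈ Fintype.piFinset S := by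
    intro x hx y hy
    rw [Fintype.mem_piFinset]
    intro t
    refine Fin.lastCases ?_ ?_ t
    · rw [Fin.snoc_last]; exact hy
    · intro s
      rw [Fin.snoc_castSucc]
      simpa using Fintype.mem_piFinset.1 hx s
  have hdecomp : wDist (Fintype.piFinset S) r u
      (fun z => ∑ j ∈ Finset.Icc i d,
        MvPolynomial.eval (fun t : Fin m => z t.castSucc) (P j) * z (Fin.last m) ^ (d - j))
      = ∑ x ∈ Fintype.piFinset S',
          wDist (S (Fin.last m)) (fun y => r (Fin.snoc x y)) (fun y => u (Fin.snoc x y))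
            (fun y => (Cp x).eval y) := by
    rw [wDist, snoc_sum]
    refine Finset.sum_congr rfl fun x hx => Finset.sum_congr rfl fun y hy => ?_
    beta_reduce
    rw [← hCpeval x y]
  have hcol : ∀ x ∈ Fintype.piFinset S',
      (if σ x = MvPolynomial.eval x (P i) then (δ x / (μ / 2)) / 2
        else 1 - (δ x / (μ / 2)) / 2) ≤
      wDist (S (Fin.last m)) (fun y => r (Fin.snoc x y)) (fun y => u (Fin.snoc x y))
        (fun y => (Cp x).eval y) / μ := by
    intro x hx
    have hres := column_step (S (Fin.last m)) (fun y => r (Fin.snoc x y))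
      (fun y => u (Fin.snoc x y)) (fun y hy => hu _ (hsnocmem x hx y hy)) e he
      (Cp x) (G x) (hCpdeg x) (hGdeg x) (σ x) (δ x) (hdec x hx) (hsucc x hx) (hfail x hx)
    rwa [hCpcoeff x] at hres
  have hfirst : (∑ x ∈ Fintype.piFinset S',
      (if σ x = MvPolynomial.eval x (P i) then (δ x / (μ / 2)) / 2
        else 1 - (δ x / (μ / 2)) / 2)) ≤
      wDist (Fintype.piFinset S) r u
        (fun z => ∑ j ∈ Finset.Icc i d,
          MvPolynomial.eval (fun t : Fin m => z t.castSucc) (P j) * z (Fin.last m) ^ (d - j)) / μ := by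
    calc (∑ x ∈ Fintype.piFinset S',
        (if σ x = MvPolynomial.eval x (P i) then (δ x / (μ / 2)) / 2
          else 1 - (δ x / (μ / 2)) / 2))
        ≤ ∑ x ∈ Fintype.piFinset S',
            wDist (S (Fin.last m)) (fun y => r (Fin.snoc x y)) (fun y => u (Fin.snoc x y))
              (fun y => (Cp x).eval y) / μ := Finset.sum_le_sum hcol
      _ = (∑ x ∈ Fintype.piFinset S',
            wDist (S (Fin.last m)) (fun y => r (Fin.snoc x y)) (fun y => u (Fin.snoc x y))
              (fun y => (Cp x).eval y)) / μ := (Finset.sum_div _ _ _).symm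
      _ = _ := by rw [hdecomp]
  refine ⟨hfirst, ?_⟩
  have h0 : Fin.snoc (fun _ : Fin m => (0:ℕ)) e ∈ D := by
    refine hdown α0 hα0D _ fun t => ?_
    refine Fin.lastCases ?_ ?_ t
    · rw [Fin.snoc_last, hα0d]; omega
    · intro s; simp
  have hmul := muDist_mul_le S hS D hdown e he h0
  set μ' : ℝ := (muDist S' {β : Fin m → ℕ | Fin.snoc β e ∈ D} : ℝ) with hμ'def
  have hμ'0 : 0 ≤ μ' := Nat.cast_nonneg _
  have hmulR : (muDist S D : ℝ) ≤ μ * μ' := by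
    have h1 : ((muDist S D : ℕ) : ℝ) ≤
        ((((S (Fin.last m)).card - e) * muDist S' {β : Fin m → ℕ | Fin.snoc β e ∈ D} : ℕ) : ℝ) := by
      exact_mod_cast hmul
    rw [Nat.cast_mul, Nat.cast_sub he.le] at h1
    exact h1
  rw [div_lt_iff₀ hμpos]
  have hΔlt : wDist (Fintype.piFinset S) r u
      (fun z => ∑ j ∈ Finset.Icc i d,
        MvPolynomial.eval (fun t : Fin m => z t.castSucc) (P j) * z (Fin.last m) ^ (d - j)) <
      μ * μ' / 2 := lt_of_lt_of_le hclose (by nlinarith [hmulR, hμpos, hμ'0])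
  linarith
end

section
/- Per-column decoding inequality: let w be a weighted word on a set T ⊆ F with values (r(y), u(y)), let C be a polynomial of degree ≤ e, and let G be a degree-≤ e polynomial output by a weighted decoder, with μ = |T| - e the RS distance. Define (σ, δ) by σ = lead-coefficient-of-interest of G and δ = Δ(w, G) if Δ(w, G) < μ/2, else σ = 0 and δ = μ/2, assuming the decoder returns a codeword within μ/2 when one exists. Then for the weighted symbol f = (σ, δ/(μ/2)) and the corresponding coefficient c of C we have Δ(f, c) ≤ Δ(w, C)/μ, where Δ(f, c) = (δ/(μ/2))/2 if σ = c, and Δ(f, c) = 1 - (δ/(μ/2))/2 otherwise. -/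
lemma wDist_triangle {F : Type*} [Field F] [DecidableEq F] (T : Finset F) (e : ℕ)
    (r : F → F) (u : F → ℝ) (hu : ∀ y ∈ T, 0 ≤ u y ∧ u y ≤ 1)
    (C G : Polynomial F) (hC : C.natDegree ≤ e) (hG : G.natDegree ≤ e) (hne : G ≠ C) :
    ((T.card : ℝ) - e) ≤ wDist T r u (fun y => G.eval y) + wDist T r u (fun y => C.eval y) := by
  have hagree : (T.filter (fun y => G.eval y = C.eval y)).card ≤ e := by
    have hsub : T.filter (fun y => G.eval y = C.eval y) ⊆ (G - C).roots.toFinset := by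
      intro y hy
      simp only [Finset.mem_filter] at hy
      rw [Multiset.mem_toFinset, Polynomial.mem_roots (sub_ne_zero.mpr hne)]
      simp [Polynomial.IsRoot, hy.2]
    calc (T.filter (fun y => G.eval y = C.eval y)).card
        ≤ (G - C).roots.toFinset.card := Finset.card_le_card hsub
      _ ≤ Multiset.card (G - C).roots := Multiset.toFinset_card_le _
      _ ≤ (G - C).natDegree := Polynomial.card_roots' _
      _ ≤ e := le_trans (Polynomial.natDegree_sub_le _ _) (max_le hG hC)
  unfold wDist
  rw [← Finset.sum_add_distrib]
  have key : ∀ y ∈ T, (if G.eval y = C.eval y then (0:ℝ) else 1) ≤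
      ((if r y = G.eval y then u y / 2 else 1 - u y / 2) +
       (if r y = C.eval y then u y / 2 else 1 - u y / 2)) := by
    intro y hy
    obtain ⟨h0, h1⟩ := hu y hy
    by_cases hgc : G.eval y = C.eval y
    · simp only [if_pos hgc]
      split <;> split <;> linarith
    · simp only [if_neg hgc]
      by_cases h2 : r y = G.eval y
      · have h3 : ¬ r y = C.eval y := by rw [h2]; exact hgc
        simp only [if_pos h2, if_neg h3]; linarith
      · simp only [if_neg h2]
        split <;> linarith
  have hsum : ((T.filter (fun y => ¬ G.eval y = C.eval y)).card : ℝ) ≤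
      ∑ y ∈ T, ((if r y = G.eval y then u y / 2 else 1 - u y / 2) +
       (if r y = C.eval y then u y / 2 else 1 - u y / 2)) := by
    have := Finset.sum_le_sum key
    calc ((T.filter (fun y => ¬ G.eval y = C.eval y)).card : ℝ)
        = ∑ y ∈ T, (if G.eval y = C.eval y then (0:ℝ) else 1) := by
          rw [Finset.sum_ite, Finset.sum_const, Finset.sum_const]
          simp
      _ ≤ _ := this
  have hcards : (T.filter (fun y => G.eval y = C.eval y)).card +
      (T.filter (fun y => ¬ G.eval y = C.eval y)).card = T.card :=
    Finset.card_filter_add_card_filter_not _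
  have : (T.card : ℝ) - e ≤ ((T.filter (fun y => ¬ G.eval y = C.eval y)).card : ℝ) := by
    have h1 : (T.card : ℝ) = ((T.filter (fun y => G.eval y = C.eval y)).card : ℝ) +
        ((T.filter (fun y => ¬ G.eval y = C.eval y)).card : ℝ) := by
      exact_mod_cast hcards.symm
    have h2 : ((T.filter (fun y => G.eval y = C.eval y)).card : ℝ) ≤ e := by
      exact_mod_cast hagree
    linarith
  linarith

/-- The per-column decoding inequality of the Kim–Kopparty algorithm: with `μ = |T| - e`,
letting `(σ, δ)` be the outcome of the column step (leading coefficient of the decoded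
polynomial `G` and its weighted distance if decoding succeeds; `(0, μ/2)` otherwise),
the weighted symbol `f = (σ, δ/(μ/2))` satisfies `Δ(f, c) ≤ Δ(w, C)/μ` for the corresponding
coefficient `c` of any degree-`≤ e` polynomial `C`. -/
theorem stmt_15 {F : Type*} [Field F] [DecidableEq F] (T : Finset F) (e : ℕ)
    (he : e < T.card) (r : F → F) (u : F → ℝ)
    (hu : ∀ y ∈ T, 0 ≤ u y ∧ u y ≤ 1)
    (C G : Polynomial F) (hCdeg : C.natDegree ≤ e) (hGdeg : G.natDegree ≤ e)
    (hdec : (∃ Q : Polynomial F, Q.natDegree ≤ e ∧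
        wDist T r u (fun y => Q.eval y) < ((T.card : ℝ) - e) / 2) →
      wDist T r u (fun y => G.eval y) < ((T.card : ℝ) - e) / 2)
    (σ : F) (δ : ℝ)
    (hsucc : wDist T r u (fun y => G.eval y) < ((T.card : ℝ) - e) / 2 →
      σ = G.coeff e ∧ δ = wDist T r u (fun y => G.eval y))
    (hfail : ¬ wDist T r u (fun y => G.eval y) < ((T.card : ℝ) - e) / 2 →
      σ = 0 ∧ δ = ((T.card : ℝ) - e) / 2) :
    (if σ = C.coeff e then (δ / (((T.card : ℝ) - e) / 2)) / 2
      else 1 - (δ / (((T.card : ℝ) - e) / 2)) / 2) ≤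
      wDist T r u (fun y => C.eval y) / ((T.card : ℝ) - e) := by
  set μ : ℝ := (T.card : ℝ) - e with hμdef
  have hμ : 0 < μ := by
    have : (e : ℝ) < (T.card : ℝ) := by exact_mod_cast he
    simp [hμdef]; linarith
  have hrw : ∀ x : ℝ, x / (μ / 2) / 2 = x / μ := by
    intro x; rw [div_div]; ring_nf
  by_cases hGd : wDist T r u (fun y => G.eval y) < μ / 2
  · obtain ⟨hσ, hδ⟩ := hsucc hGd
    by_cases hGC : G = C
    · subst hGC
      rw [if_pos (by rw [hσ]), hrw, div_le_div_iff₀ hμ hμ, hδ]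
    · have tri := wDist_triangle T e r u hu C G hCdeg hGdeg hGC
      by_cases hc : σ = C.coeff e
      · rw [if_pos hc, hrw, div_le_div_iff₀ hμ hμ]
        nlinarith
      · rw [if_neg hc, hrw]
        have h1 : 1 - δ / μ = (μ - δ) / μ := by field_simp
        rw [h1, div_le_div_iff₀ hμ hμ]
        nlinarith
  · obtain ⟨hσ, hδ⟩ := hfail hGd
    have hC2 : ¬ wDist T r u (fun y => C.eval y) < μ / 2 :=
      fun h => hGd (hdec ⟨C, hCdeg, h⟩)
    push_neg at hC2
    have hone : δ / (μ / 2) = 1 := by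
      rw [hδ]; exact div_self (by positivity)
    rw [hone]
    have : (1:ℝ) / 2 ≤ wDist T r u (fun y => C.eval y) / μ := by
      rw [div_le_div_iff₀ (by norm_num) hμ]
      linarith
    split <;> [exact this; (norm_num; exact this)]
end
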